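/- arXiv:2401.00817 — 12 statements merged into one kernel-verified Lean document; each statement's English description precedes it below -/
import Mathlib

section
/- The pair (ω^ω, 𝒦(ω^ω)) is Tukey equivalent to the directed set (ℕ → ℕ) with the pointwise order, and so is the pair (ℱ(ω^ω), 𝒦(ω^ω)). Precisely: (a) there is a map φ : 𝒦(ℕ→ℕ) → (ℕ→ℕ) such that whenever a family 𝒞 of compact subsets of ℕ→ℕ has the property that every finite subset of ℕ→ℕ is contained in some member of 𝒞 (in particular whenever 𝒞 is a compact cover), the image {φ(C) : C ∈ 𝒞} is cofinal in (ℕ→ℕ, pointwise ≤); and (b) there is a map ψ : (ℕ→ℕ) → 𝒦(ℕ→ℕ) such that for every cofinal subset S of (ℕ→ℕ, pointwise ≤), the family {ψ(f) : f ∈ S} is a compact cover of ℕ→ℕ in which, moreover, every finite subset of ℕ→ℕ is contained in some member. -/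
lemma phi_spec (K : {K : Set (ℕ → ℕ) // IsCompact K}) (x : ℕ → ℕ) (hx : x ∈ K.1) :
    x ≤ fun n => sSup ((fun f => f n) '' K.1) := by
  intro n
  have hfin : ((fun f : ℕ → ℕ => f n) '' K.1).Finite :=
    (K.2.image (continuous_apply n)).finite_of_discrete
  exact le_csSup hfin.bddAbove ⟨x, hx, rfl⟩

lemma psi_compact (f : ℕ → ℕ) : IsCompact (Set.Iic f) := by
  have : Set.Iic f = Set.pi Set.univ (fun n => Set.Iic (f n)) := by
    ext x; simp [Pi.le_def, Set.mem_pi]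
  rw [this]
  exact isCompact_univ_pi fun n => (Set.finite_Iic (f n)).isCompact

/-- The pair `(ω^ω, 𝒦(ω^ω))` is Tukey equivalent to `(ℕ → ℕ)` with the pointwise order,
and so is the pair `(ℱ(ω^ω), 𝒦(ω^ω))`. -/
theorem baire_space_compacts_tukey_equiv_nat_nat :
    (∃ φ : {K : Set (ℕ → ℕ) // IsCompact K} → (ℕ → ℕ),
      (∀ 𝒞 : Set {K : Set (ℕ → ℕ) // IsCompact K},
        (∀ x : ℕ → ℕ, ∃ C ∈ 𝒞, x ∈ C.1) →
        ∀ g : ℕ → ℕ, ∃ C ∈ 𝒞, g ≤ φ C) ∧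
      (∀ 𝒞 : Set {K : Set (ℕ → ℕ) // IsCompact K},
        (∀ F : Set (ℕ → ℕ), F.Finite → ∃ C ∈ 𝒞, F ⊆ C.1) →
        ∀ g : ℕ → ℕ, ∃ C ∈ 𝒞, g ≤ φ C)) ∧
    (∃ ψ : (ℕ → ℕ) → {K : Set (ℕ → ℕ) // IsCompact K},
      ∀ S : Set (ℕ → ℕ),
        (∀ g : ℕ → ℕ, ∃ f ∈ S, g ≤ f) →
        (∀ x : ℕ → ℕ, ∃ f ∈ S, x ∈ (ψ f).1) ∧
        (∀ F : Set (ℕ → ℕ), F.Finite → ∃ f ∈ S, F ⊆ (ψ f).1)) := by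
  constructor
  · refine ⟨fun K => fun n => sSup ((fun f => f n) '' K.1), ?_, ?_⟩
    · intro 𝒞 hcov g
      obtain ⟨C, hC, hg⟩ := hcov g
      exact ⟨C, hC, phi_spec C g hg⟩
    · intro 𝒞 hcov g
      obtain ⟨C, hC, hg⟩ := hcov {g} (Set.finite_singleton g)
      exact ⟨C, hC, phi_spec C g (hg rfl)⟩
  · refine ⟨fun f => ⟨Set.Iic f, psi_compact f⟩, fun S hS => ⟨?_, ?_⟩⟩
    · intro x
      obtain ⟨f, hf, hx⟩ := hS x
      exact ⟨f, hf, hx⟩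
    · intro F hF
      rcases F.eq_empty_or_nonempty with rfl | hne
      · obtain ⟨f, hf, _⟩ := hS 0
        exact ⟨f, hf, by simp⟩
      · obtain ⟨g, hg⟩ := hF.bddAbove
        obtain ⟨f, hf, hgf⟩ := hS g
        exact ⟨f, hf, fun x hx => le_trans (hg hx) hgf⟩
end

section
/- Let X be a Hausdorff topological space. Then X is totally countably compact (for every sequence (x_n) in X there is an infinite set A ⊆ ℕ such that the closure of {x_n : n ∈ A} is compact) if and only if there is NO map φ : 𝒦(X) → Finset ℕ such that for every compact cover 𝒞 of X the image {φ(C) : C ∈ 𝒞} is cofinal in (Finset ℕ, ⊆). -/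
/-- A Hausdorff space `X` is totally countably compact iff there is no relative Tukey
quotient from `(X, 𝒦(X))` to `[ω]^{<ω}`. -/
theorem totallyCountablyCompact_iff_not_tukey_quotient_to_finsets
    (X : Type*) [TopologicalSpace X] [T2Space X] :
    (∀ x : ℕ → X, ∃ A : Set ℕ, A.Infinite ∧ IsCompact (closure (x '' A))) ↔
    ¬ ∃ φ : {K : Set X // IsCompact K} → Finset ℕ,
        ∀ 𝒞 : Set {K : Set X // IsCompact K},
          (∀ p : X, ∃ C ∈ 𝒞, p ∈ C.1) →
          ∀ F : Finset ℕ, ∃ C ∈ 𝒞, F ⊆ φ C := by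
  constructor
  · rintro h ⟨φ, hφ⟩
    have key : ∀ n : ℕ, ∃ p : X, ∀ C : {K : Set X // IsCompact K},
        p ∈ C.1 → Finset.range (n+1) ⊆ φ C := by
      intro n
      by_contra hc
      push_neg at hc
      have hcov : ∀ p : X, ∃ C ∈ {C : {K : Set X // IsCompact K} |
          ¬ Finset.range (n+1) ⊆ φ C}, p ∈ C.1 := by
        intro p
        obtain ⟨C, hpC, hns⟩ := hc p
        exact ⟨C, hns, hpC⟩
      obtain ⟨C, hC, hsub⟩ := hφ _ hcov (Finset.range (n+1))
      exact hC hsub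
    choose x hx using key
    obtain ⟨A, hAinf, hAcpt⟩ := h x
    set K : {K : Set X // IsCompact K} := ⟨closure (x '' A), hAcpt⟩ with hKdef
    have hsub : A ⊆ ↑(φ K) := by
      intro n hn
      have hmem : x n ∈ K.1 := subset_closure ⟨n, hn, rfl⟩
      exact hx n K hmem (Finset.self_mem_range_succ n)
    exact hAinf ((φ K).finite_toSet.subset hsub)
  · intro h
    by_contra hnot
    push_neg at hnot
    obtain ⟨x, hx⟩ := hnot
    apply h
    have hfin : ∀ C : {K : Set X // IsCompact K}, {n : ℕ | x n ∈ C.1}.Finite := by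
      intro C
      rw [← Set.not_infinite]
      intro hinf
      apply hx _ hinf
      have himg : x '' {n : ℕ | x n ∈ C.1} ⊆ C.1 := by
        rintro _ ⟨n, hn, rfl⟩; exact hn
      exact C.2.of_isClosed_subset isClosed_closure
        (closure_minimal himg C.2.isClosed)
    refine ⟨fun C => Finset.range (((hfin C).toFinset.sup id) + 1), ?_⟩
    intro 𝒞 hcov F
    set m : ℕ := F.sup id with hm
    obtain ⟨C, hC𝒞, hmC⟩ := hcov (x m)
    refine ⟨C, hC𝒞, ?_⟩
    have hmem : m ∈ (hfin C).toFinset := by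
      simp only [Set.Finite.mem_toFinset, Set.mem_setOf_eq]; exact hmC
    have hle : m ≤ (hfin C).toFinset.sup id := Finset.le_sup (f := id) hmem
    intro k hk
    have : k ≤ m := Finset.le_sup (f := id) hk
    exact Finset.mem_range.mpr (by omega)
end

section
/- Let X be a Hausdorff topological space. Then X is totally countably compact for finite sets (for every sequence (F_n) of finite subsets of X there is an infinite set A ⊆ ℕ such that the closure of ⋃{F_n : n ∈ A} is compact) if and only if there is NO map φ : 𝒦(X) → Finset ℕ such that whenever 𝒞 ⊆ 𝒦(X) has the property that every finite subset of X is contained in some member of 𝒞, the image {φ(C) : C ∈ 𝒞} is cofinal in (Finset ℕ, ⊆). -/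
/-- A Hausdorff space `X` is totally countably compact for finite sets iff there is no
relative Tukey quotient from `(ℱ(X), 𝒦(X))` to `[ω]^{<ω}`. -/
theorem totallyCountablyCompactForFiniteSets_iff_not_tukey_quotient_to_finsets
    (X : Type*) [TopologicalSpace X] [T2Space X] :
    (∀ F : ℕ → Finset X, ∃ A : Set ℕ, A.Infinite ∧
        IsCompact (closure (⋃ n ∈ A, (F n : Set X)))) ↔
    ¬ ∃ φ : {K : Set X // IsCompact K} → Finset ℕ,
        ∀ 𝒞 : Set {K : Set X // IsCompact K},
          (∀ F : Set X, F.Finite → ∃ C ∈ 𝒞, F ⊆ C.1) →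
          ∀ F : Finset ℕ, ∃ C ∈ 𝒞, F ⊆ φ C := by
  constructor
  · rintro h ⟨φ, hφ⟩
    have key : ∀ n : ℕ, ∃ F : Finset X, ∀ K : {K : Set X // IsCompact K},
        (F : Set X) ⊆ K.1 → n ∈ φ K := by
      intro n
      by_contra hc
      push_neg at hc
      obtain ⟨C, hC, hsub⟩ := hφ {K | n ∉ φ K}
        (fun F hF => by
          obtain ⟨K, hK, hn⟩ := hc hF.toFinset
          exact ⟨K, hn, by simpa [Set.Finite.coe_toFinset] using hK⟩) {n}
      exact hC (hsub (Finset.mem_singleton_self n))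
    choose F hF using key
    obtain ⟨A, hAinf, hcomp⟩ := h F
    set K : {K : Set X // IsCompact K} := ⟨closure (⋃ n ∈ A, (F n : Set X)), hcomp⟩
    have hsub : A ⊆ ((φ K : Finset ℕ) : Set ℕ) := fun n hn =>
      hF n K (show (F n : Set X) ⊆ closure (⋃ m ∈ A, (F m : Set X)) from
        (Set.subset_biUnion_of_mem (u := fun m => (F m : Set X)) hn).trans subset_closure)
    exact hAinf ((φ K).finite_toSet.subset hsub)
  · intro h F
    by_contra hc
    push_neg at hc
    apply h
    have hfin : ∀ K : {K : Set X // IsCompact K}, {n | (F n : Set X) ⊆ K.1}.Finite := by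
      intro K
      by_contra hinf
      refine hc _ (Set.not_infinite.not_right.mp (fun hf => hinf hf)) ?_
      · refine K.2.of_isClosed_subset isClosed_closure (closure_minimal ?_ K.2.isClosed)
        exact Set.iUnion₂_subset fun n hn => hn
    refine ⟨fun K => (hfin K).toFinset, fun 𝒞 h𝒞 Fs => ?_⟩
    have hU : (⋃ n ∈ Fs, (F n : Set X)).Finite :=
      Set.Finite.biUnion Fs.finite_toSet fun n _ => (F n).finite_toSet
    obtain ⟨C, hC, hsub⟩ := h𝒞 _ hU
    refine ⟨C, hC, fun n hn => ?_⟩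
    rw [Set.Finite.mem_toFinset]
    exact (Set.subset_biUnion_of_mem hn).trans hsub
end

section
/- Let X be a Hausdorff topological space. Then X is ω-bounded (every countable subset of X has compact closure) if and only if there exist a directed partially ordered set P in which every countable subset has an upper bound, together with a map φ : P → 𝒦(X) such that for every cofinal subset S of P the family {φ(p) : p ∈ S} is a compact cover of X. -/
universe u

/-- A Hausdorff space `X` is ω-bounded iff there is a countably directed partially ordered
set `P` with a relative Tukey quotient `P ≥_T (X, 𝒦(X))`. -/
theorem omegaBounded_iff_exists_countablyDirected_tukey_quotient
    (X : Type u) [TopologicalSpace X] [T2Space X] :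
    (∀ C : Set X, C.Countable → IsCompact (closure C)) ↔
    ∃ (P : Type u) (_ : PartialOrder P),
      (∀ p q : P, ∃ r : P, p ≤ r ∧ q ≤ r) ∧
      (∀ c : Set P, c.Countable → ∃ b : P, ∀ p ∈ c, p ≤ b) ∧
      ∃ φ : P → {K : Set X // IsCompact K},
        ∀ S : Set P, (∀ p : P, ∃ s ∈ S, p ≤ s) →
          ∀ x : X, ∃ s ∈ S, x ∈ (φ s).1 := by
  constructor
  · intro h
    refine ⟨{C : Set X // C.Countable}, inferInstance, ?_, ?_, ?_⟩
    · intro p q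
      exact ⟨⟨p.1 ∪ q.1, p.2.union q.2⟩, Set.subset_union_left, Set.subset_union_right⟩
    · intro c hc
      refine ⟨⟨⋃ p ∈ c, (p : {C : Set X // C.Countable}).1,
        hc.biUnion fun p _ => p.2⟩, fun p hp => ?_⟩
      exact Set.subset_biUnion_of_mem (u := fun p => p.1) hp
    · refine ⟨fun C => ⟨closure C.1, h C.1 C.2⟩, fun S hS x => ?_⟩
      obtain ⟨s, hsS, hs⟩ := hS ⟨{x}, Set.countable_singleton x⟩
      exact ⟨s, hsS, subset_closure (hs rfl)⟩
  · rintro ⟨P, _, hdir, hω, φ, hφ⟩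
    intro C hC
    have key : ∀ x : X, ∃ p : P, ∀ q : P, p ≤ q → x ∈ (φ q).1 := by
      intro x
      by_contra hx
      push_neg at hx
      have hcof : ∀ p : P, ∃ s ∈ {s : P | x ∉ (φ s).1}, p ≤ s := by
        intro p
        obtain ⟨q, hpq, hq⟩ := hx p
        exact ⟨q, hq, hpq⟩
      obtain ⟨s, hs, hxs⟩ := hφ _ hcof x
      exact hs hxs
    choose f hf using key
    obtain ⟨b, hb⟩ := hω (f '' C) (hC.image f)
    have hCb : C ⊆ (φ b).1 := fun x hx => hf x b (hb _ ⟨x, hx, rfl⟩)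
    exact (φ b).2.of_isClosed_subset isClosed_closure
      (closure_minimal hCb (φ b).2.isClosed)
end

section
/- Let X be a topological space and let (Y₁,e₁) and (Y₂,e₂) be two compactifications of X: Y₁ and Y₂ are compact Hausdorff spaces and eᵢ : X → Yᵢ is a topological embedding with dense range, for i = 1,2. Let Rᵢ = Yᵢ \ eᵢ(X) be the remainders, with the subspace topologies. Then (R₁,𝒦(R₁)) is Tukey equivalent to (R₂,𝒦(R₂)), and 𝒦(R₁) is Tukey equivalent to 𝒦(R₂). Precisely, there are maps φ : 𝒦(R₁) → 𝒦(R₂) and ψ : 𝒦(R₂) → 𝒦(R₁) such that each carries compact covers of its domain remainder to compact covers of the other remainder, and each carries families cofinal in (𝒦(Rᵢ),⊆) to families cofinal in (𝒦(R_j),⊆). -/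
set_option linter.unusedSectionVars false

open Filter Topology Set

section Aux

variable {X Y Z : Type*} [TopologicalSpace X] [TopologicalSpace Y] [TopologicalSpace Z]

private lemma mem_closure_range_iff_neBot {f : X → Y} {y : Y} :
    y ∈ closure (Set.range f) ↔ NeBot (Filter.comap f (𝓝 y)) := by
  rw [mem_closure_iff_nhds, Filter.comap_neBot_iff]
  constructor
  · intro h t ht
    obtain ⟨z, hz, x, rfl⟩ := h t ht
    exact ⟨x, hz⟩
  · intro h t ht
    obtain ⟨x, hx⟩ := h t ht
    exact ⟨f x, hx, x, rfl⟩

/-- If `(y, g x)` lies in the closure of the "double graph", then `y = f x`. -/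
private lemma aux_graph_pt [T2Space Y] {f : X → Y} {g : X → Z} (hf : Continuous f)
    (hg : Topology.IsEmbedding g) {y : Y} {x : X}
    (h : (y, g x) ∈ closure (Set.range fun a => (f a, g a))) : y = f x := by
  have hF : NeBot (Filter.comap (fun a => (f a, g a)) (𝓝 (y, g x))) :=
    mem_closure_range_iff_neBot.mp h
  have hcom : Filter.comap (fun a => (f a, g a)) (𝓝 (y, g x)) =
      Filter.comap f (𝓝 y) ⊓ 𝓝 x := by
    rw [nhds_prod_eq, Filter.comap_prod]
    simp only [Function.comp_def]
    rw [← hg.nhds_eq_comap x]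
  rw [hcom] at hF
  set F := Filter.comap f (𝓝 y) ⊓ 𝓝 x with hFdef
  have h1 : Filter.map f F ≤ 𝓝 y :=
    le_trans (Filter.map_mono inf_le_left) (Filter.map_comap_le)
  have h2 : Filter.map f F ≤ 𝓝 (f x) :=
    le_trans (Filter.map_mono inf_le_right) (hf.continuousAt (x := x))
  have : NeBot (𝓝 y ⊓ 𝓝 (f x)) := neBot_of_le (le_inf h1 h2)
  exact eq_of_nhds_neBot this

private lemma aux_swap_mem {f : X → Y} {g : X → Z} {y : Y} {z : Z} :
    (y, z) ∈ closure (Set.range fun a => (f a, g a)) ↔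
    (z, y) ∈ closure (Set.range fun a => (g a, f a)) := by
  constructor <;> intro h
  · have := (Homeomorph.prodComm Y Z).image_closure (Set.range fun a => (f a, g a))
    have hmem : (z, y) ∈ (Homeomorph.prodComm Y Z) '' closure (Set.range fun a => (f a, g a)) :=
      ⟨(y, z), h, rfl⟩
    rw [this] at hmem
    refine closure_mono ?_ hmem
    rintro p ⟨q, ⟨a, rfl⟩, rfl⟩
    exact ⟨a, rfl⟩
  · have := (Homeomorph.prodComm Z Y).image_closure (Set.range fun a => (g a, f a))
    have hmem : (y, z) ∈ (Homeomorph.prodComm Z Y) '' closure (Set.range fun a => (g a, f a)) :=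
      ⟨(z, y), h, rfl⟩
    rw [this] at hmem
    refine closure_mono ?_ hmem
    rintro p ⟨q, ⟨a, rfl⟩, rfl⟩
    exact ⟨a, rfl⟩

/-- For a point of the remainder of the second compactification, there is a point of the
remainder of the first compactification related to it through the closed graph. -/
private lemma aux_exists [CompactSpace Y] [CompactSpace Z] [T2Space Y] [T2Space Z]
    {f : X → Y} {g : X → Z}
    (hf : Topology.IsEmbedding f) (hg : Topology.IsEmbedding g)
    (hdg : Dense (Set.range g)) {z : Z} (hz : z ∉ Set.range g) :
    ∃ y : Y, y ∉ Set.range f ∧ (y, z) ∈ closure (Set.range fun a => (f a, g a)) := by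
  set G := closure (Set.range fun a => (f a, g a)) with hG
  have hGc : IsCompact G := (isClosed_closure).isCompact
  have himg : Prod.snd '' G = Set.univ := by
    have hcl : IsClosed (Prod.snd '' G) := (hGc.image continuous_snd).isClosed
    have hsub : Set.range g ⊆ Prod.snd '' G := by
      rintro _ ⟨x, rfl⟩
      exact ⟨(f x, g x), subset_closure ⟨x, rfl⟩, rfl⟩
    have : closure (Set.range g) ⊆ Prod.snd '' G := hcl.closure_subset_iff.mpr hsub
    rw [hdg.closure_eq] at this
    exact Set.eq_univ_of_univ_subset this
  have : z ∈ Prod.snd '' G := himg ▸ Set.mem_univ z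
  obtain ⟨p, hpG, hpz⟩ := this
  have hpG' : (p.1, p.2) ∈ G := by rw [Prod.mk.eta]; exact hpG
  refine ⟨p.1, ?_, by rw [← hpz]; exact hpG'⟩
  rintro ⟨x, hx⟩
  -- then z = g x, contradiction
  have hsw : (p.2, p.1) ∈ closure (Set.range fun a => (g a, f a)) := aux_swap_mem.mp hpG'
  rw [← hx] at hsw
  have hgx : p.2 = g x := aux_graph_pt hg.continuous hf hsw
  exact hz ⟨x, by rw [← hgx, hpz]⟩

/-- The relational image of a compact subset of one remainder in the other remainder
is compact. -/
private lemma aux_compact [CompactSpace Y] [CompactSpace Z] [T2Space Y] [T2Space Z]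
    {f : X → Y} {g : X → Z}
    (hf : Topology.IsEmbedding f) (hg : Topology.IsEmbedding g)
    {K : Set ((Set.range f)ᶜ : Set Y)} (hK : IsCompact K) :
    IsCompact {w : ((Set.range g)ᶜ : Set Z) |
      ∃ z ∈ K, ((z : Y), (w : Z)) ∈ closure (Set.range fun a => (f a, g a))} := by
  set G := closure (Set.range fun a => (f a, g a)) with hG
  have hGc : IsCompact G := (isClosed_closure).isCompact
  set A : Set Y := Subtype.val '' K with hA
  have hAc : IsCompact A := hK.image continuous_subtype_val
  set S : Set (Y × Z) := G ∩ (A ×ˢ Set.univ) with hS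
  have hSc : IsCompact S := hGc.inter_right (hAc.isClosed.prod isClosed_univ)
  set B : Set Z := Prod.snd '' S with hB
  have hBc : IsCompact B := hSc.image continuous_snd
  have hBsub : B ⊆ (Set.range g)ᶜ := by
    rintro _ ⟨⟨y, b⟩, ⟨hG', hy, -⟩, rfl⟩
    rintro ⟨x, rfl⟩
    obtain ⟨z, hzK, hzy⟩ := hy
    have : y = f x := aux_graph_pt hf.continuous hg hG'
    exact z.2 (hzy ▸ this ▸ Set.mem_range_self x)
  have key : Subtype.val '' {w : ((Set.range g)ᶜ : Set Z) |
      ∃ z ∈ K, ((z : Y), (w : Z)) ∈ G} = B := by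
    ext b
    constructor
    · rintro ⟨w, ⟨z, hzK, hzw⟩, rfl⟩
      exact ⟨((z : Y), (w : Z)), ⟨hzw, ⟨z, hzK, rfl⟩, Set.mem_univ _⟩, rfl⟩
    · rintro ⟨⟨y, b'⟩, ⟨hG', ⟨z, hzK, hzy⟩, -⟩, rfl⟩
      have hbB : ((y, b') : Y × Z).2 ∈ B :=
        ⟨(y, b'), ⟨hG', ⟨z, hzK, hzy⟩, Set.mem_univ _⟩, rfl⟩
      refine ⟨⟨b', hBsub hbB⟩, ⟨z, hzK, ?_⟩, rfl⟩
      rw [hzy]; exact hG'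
  rw [Topology.IsEmbedding.subtypeVal.isCompact_iff, key]
  exact hBc

end Aux

/-- The remainders of a space `X` in any two compactifications have Tukey equivalent pairs
`(R, 𝒦(R))` and Tukey equivalent `𝒦(R)`. -/
theorem remainders_of_compactifications_tukey_equiv
    (X Y₁ Y₂ : Type*) [TopologicalSpace X] [TopologicalSpace Y₁] [TopologicalSpace Y₂]
    [CompactSpace Y₁] [T2Space Y₁] [CompactSpace Y₂] [T2Space Y₂]
    (e₁ : X → Y₁) (e₂ : X → Y₂)
    (he₁ : Topology.IsEmbedding e₁) (he₂ : Topology.IsEmbedding e₂)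
    (hd₁ : Dense (Set.range e₁)) (hd₂ : Dense (Set.range e₂)) :
    ∃ (φ : {K : Set ((Set.range e₁)ᶜ : Set Y₁) // IsCompact K} →
           {K : Set ((Set.range e₂)ᶜ : Set Y₂) // IsCompact K})
      (ψ : {K : Set ((Set.range e₂)ᶜ : Set Y₂) // IsCompact K} →
           {K : Set ((Set.range e₁)ᶜ : Set Y₁) // IsCompact K}),
      (∀ 𝒞 : Set {K : Set ((Set.range e₁)ᶜ : Set Y₁) // IsCompact K},
        (∀ z, ∃ C ∈ 𝒞, z ∈ C.1) → ∀ w, ∃ C ∈ 𝒞, w ∈ (φ C).1) ∧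
      (∀ 𝒞 : Set {K : Set ((Set.range e₂)ᶜ : Set Y₂) // IsCompact K},
        (∀ w, ∃ C ∈ 𝒞, w ∈ C.1) → ∀ z, ∃ C ∈ 𝒞, z ∈ (ψ C).1) ∧
      (∀ S : Set {K : Set ((Set.range e₁)ᶜ : Set Y₁) // IsCompact K},
        (∀ K : {K : Set ((Set.range e₁)ᶜ : Set Y₁) // IsCompact K}, ∃ C ∈ S, K.1 ⊆ C.1) →
        ∀ L : {K : Set ((Set.range e₂)ᶜ : Set Y₂) // IsCompact K}, ∃ C ∈ S, L.1 ⊆ (φ C).1) ∧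
      (∀ S : Set {K : Set ((Set.range e₂)ᶜ : Set Y₂) // IsCompact K},
        (∀ L : {K : Set ((Set.range e₂)ᶜ : Set Y₂) // IsCompact K}, ∃ C ∈ S, L.1 ⊆ C.1) →
        ∀ K : {K : Set ((Set.range e₁)ᶜ : Set Y₁) // IsCompact K}, ∃ C ∈ S, K.1 ⊆ (ψ C).1) := by
  set G : Set (Y₁ × Y₂) := closure (Set.range fun a => (e₁ a, e₂ a)) with hGdef
  -- φ : relational image forward
  refine ⟨fun K => ⟨{w | ∃ z ∈ K.1, ((z : Y₁), (w : Y₂)) ∈ G}, aux_compact he₁ he₂ K.2⟩,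
          fun L => ⟨{z | ∃ w ∈ L.1, ((w : Y₂), (z : Y₁)) ∈
            closure (Set.range fun a => (e₂ a, e₁ a))}, aux_compact he₂ he₁ L.2⟩, ?_, ?_, ?_, ?_⟩
  · -- compact covers forward
    intro 𝒞 hcov w
    obtain ⟨y, hy, hyG⟩ := aux_exists he₁ he₂ hd₂ w.2
    obtain ⟨C, hC, hzC⟩ := hcov ⟨y, hy⟩
    exact ⟨C, hC, ⟨y, hy⟩, hzC, hyG⟩
  · -- compact covers backward
    intro 𝒞 hcov z
    obtain ⟨y, hy, hyG⟩ := aux_exists he₂ he₁ hd₁ z.2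
    obtain ⟨C, hC, hwC⟩ := hcov ⟨y, hy⟩
    exact ⟨C, hC, ⟨y, hy⟩, hwC, hyG⟩
  · -- cofinal forward
    intro S hS L
    -- ψ L is compact in R₁
    have hψc : IsCompact {z : ((Set.range e₁)ᶜ : Set Y₁) | ∃ w ∈ L.1,
        ((w : Y₂), (z : Y₁)) ∈ closure (Set.range fun a => (e₂ a, e₁ a))} :=
      aux_compact he₂ he₁ L.2
    obtain ⟨C, hCS, hC⟩ := hS ⟨_, hψc⟩
    refine ⟨C, hCS, fun w hw => ?_⟩
    obtain ⟨y, hy, hyG⟩ := aux_exists he₁ he₂ hd₂ w.2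
    have hz : (⟨y, hy⟩ : ((Set.range e₁)ᶜ : Set Y₁)) ∈ {z : ((Set.range e₁)ᶜ : Set Y₁) |
        ∃ w ∈ L.1, ((w : Y₂), (z : Y₁)) ∈ closure (Set.range fun a => (e₂ a, e₁ a))} :=
      ⟨w, hw, aux_swap_mem.mp hyG⟩
    exact ⟨⟨y, hy⟩, hC hz, hyG⟩
  · -- cofinal backward
    intro S hS K
    have hφc : IsCompact {w : ((Set.range e₂)ᶜ : Set Y₂) | ∃ z ∈ K.1,
        ((z : Y₁), (w : Y₂)) ∈ G} := aux_compact he₁ he₂ K.2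
    obtain ⟨C, hCS, hC⟩ := hS ⟨_, hφc⟩
    refine ⟨C, hCS, fun z hz => ?_⟩
    obtain ⟨y, hy, hyG⟩ := aux_exists he₂ he₁ hd₁ z.2
    have hw : (⟨y, hy⟩ : ((Set.range e₂)ᶜ : Set Y₂)) ∈ {w : ((Set.range e₂)ᶜ : Set Y₂) |
        ∃ z ∈ K.1, ((z : Y₁), (w : Y₂)) ∈ G} :=
      ⟨z, hz, aux_swap_mem.mp hyG⟩
    exact ⟨⟨y, hy⟩, hC hw, hyG⟩
end

section
/- Let M and N be separable metrizable spaces. Suppose there is a map φ : 𝒦(M) → 𝒦(N) such that for every compact cover 𝒞 of M the image {φ(C) : C ∈ 𝒞} is a compact cover of N (that is, (M,𝒦(M)) ≥_T (N,𝒦(N))). If M is Menger then N is Menger. -/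
/-- A topological space is Menger if for every sequence of open covers `(𝒰ₙ)` there are
finite subfamilies `𝒱ₙ ⊆ 𝒰ₙ` whose union covers the space. -/
def MengerSpace (X : Type*) [TopologicalSpace X] : Prop :=
  ∀ U : ℕ → Set (Set X),
    (∀ n, (∀ u ∈ U n, IsOpen u) ∧ ⋃₀ U n = Set.univ) →
    ∃ V : ℕ → Set (Set X),
      (∀ n, V n ⊆ U n ∧ (V n).Finite) ∧ (⋃ n, ⋃₀ V n) = Set.univ

/-- If `M`, `N` are separable metrizable and `(M,𝒦(M)) ≥_T (N,𝒦(N))`, then `N` is Menger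
whenever `M` is Menger. -/
theorem menger_of_tukey_quotient
    {M N : Type*} [TopologicalSpace M] [TopologicalSpace N]
    [TopologicalSpace.MetrizableSpace M] [TopologicalSpace.SeparableSpace M]
    [TopologicalSpace.MetrizableSpace N] [TopologicalSpace.SeparableSpace N]
    (φ : {K : Set M // IsCompact K} → {K : Set N // IsCompact K})
    (hφ : ∀ 𝒞 : Set {K : Set M // IsCompact K},
      (∀ x : M, ∃ C ∈ 𝒞, x ∈ C.1) → ∀ y : N, ∃ C ∈ 𝒞, y ∈ (φ C).1)
    (hM : MengerSpace M) : MengerSpace N := by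
  intro U hU
  rcases isEmpty_or_nonempty N with hN | hN
  · refine ⟨fun _ => ∅, fun n => ⟨Set.empty_subset _, Set.finite_empty⟩, ?_⟩
    have : (Set.univ : Set N) = ∅ := Set.univ_eq_empty_iff.2 hN
    simp [this]
  -- Set up metric structures
  letI : MetricSpace M := TopologicalSpace.metrizableSpaceMetric M
  letI : MetricSpace N := TopologicalSpace.metrizableSpaceMetric N
  haveI : SecondCountableTopology N := UniformSpace.secondCountable_of_separable N
  -- Step 1: extract countable subcovers of each U n
  have key : ∀ n, ∃ u : ℕ → Set N, (∀ m, u m ∈ U n) ∧ (⋃ m, u m) = Set.univ := by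
    intro n
    obtain ⟨hop, hcov⟩ := hU n
    obtain ⟨T, hTc, hTU⟩ :=
      TopologicalSpace.isOpen_iUnion_countable (fun v : U n => (v : Set N))
        (fun v => hop v v.2)
    have huniv : ⋃ v : U n, (v : Set N) = Set.univ := by
      rw [← hcov, Set.sUnion_eq_iUnion]
    have hTuniv : ⋃ v ∈ T, (v : Set N) = Set.univ := by rw [hTU, huniv]
    have hTne : T.Nonempty := by
      rcases Set.eq_empty_or_nonempty T with h | h
      · exfalso
        rw [h] at hTuniv
        simp only [Set.mem_empty_iff_false, Set.iUnion_of_empty, Set.iUnion_empty] at hTuniv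
        exact (hN.elim fun y => (hTuniv ▸ Set.mem_univ y : (y : N) ∈ (∅ : Set N)))
      · exact h
    obtain ⟨e, he⟩ := hTc.exists_eq_range hTne
    refine ⟨fun m => (e m : Set N), fun m => (e m).2, ?_⟩
    rw [← hTuniv, he]
    ext y
    simp [Set.mem_iUnion]
  choose u hu1 hu2 using key
  -- Step 2: increasing open sets W n k
  set W : ℕ → ℕ → Set N := fun n k => ⋃ m ∈ Set.Iic k, u n m with hW
  have hWmono : ∀ n, Monotone (W n) := by
    intro n k k' hkk'
    exact Set.biUnion_subset_biUnion_left (Set.Iic_subset_Iic.2 hkk')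
  have hWopen : ∀ n k, IsOpen (W n k) := by
    intro n k
    exact isOpen_biUnion fun m _ => (hU n).1 _ (hu1 n m)
  have hWuniv : ∀ n, ⋃ k, W n k = Set.univ := by
    intro n
    apply Set.eq_univ_of_univ_subset
    rw [← hu2 n]
    intro y hy
    obtain ⟨m, hm⟩ := Set.mem_iUnion.1 hy
    exact Set.mem_iUnion.2 ⟨m, Set.mem_biUnion (Set.mem_Iic.2 le_rfl) hm⟩
  -- Step 3: every compact subset of N is in some W n k
  have hsub : ∀ (K : {K : Set N // IsCompact K}) n, ∃ k, K.1 ⊆ W n k := by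
    intro K n
    have hcover : K.1 ⊆ ⋃ k, W n k := by rw [hWuniv n]; exact Set.subset_univ _
    obtain ⟨t, ht⟩ := K.2.elim_finite_subcover (W n) (hWopen n) hcover
    refine ⟨t.sup id, ht.trans ?_⟩
    intro y hy
    obtain ⟨k, hk, hyk⟩ := Set.mem_iUnion₂.1 hy
    exact hWmono n (Finset.le_sup (f := id) hk) hyk
  -- Step 4: sets S n k in M, monotone in k, absorbing compacts
  set S : ℕ → ℕ → Set M := fun n k =>
    {x : M | ∃ K : {K : Set M // IsCompact K}, x ∈ K.1 ∧ (φ K).1 ⊆ W n k} with hS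
  have hSmono : ∀ n, Monotone (S n) := by
    intro n k k' hkk' x ⟨K, hxK, hK⟩
    exact ⟨K, hxK, hK.trans (hWmono n hkk')⟩
  have hbd : ∀ (K : {K : Set M // IsCompact K}) n, ∃ k, K.1 ⊆ S n k := by
    intro K n
    obtain ⟨k, hk⟩ := hsub (φ K) n
    exact ⟨k, fun x hx => ⟨K, hx, hk⟩⟩
  -- Step 5: the interiors of S n k cover M
  have hcoverM : ∀ n x, ∃ k, x ∈ interior (S n k) := by
    intro n x
    by_contra hcon
    push_neg at hcon
    obtain ⟨B, hB⟩ := (nhds x).exists_antitone_basis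
    have : ∀ j : ℕ, ∃ y, y ∈ B j ∧ y ∉ S n j := by
      intro j
      by_contra hcon2
      push_neg at hcon2
      have hBsub : B j ⊆ S n j := fun y hy => hcon2 y hy
      exact hcon j (mem_interior_iff_mem_nhds.2 (Filter.mem_of_superset
        (hB.toHasBasis.mem_of_mem trivial) hBsub))
    choose y hy1 hy2 using this
    have hten : Filter.Tendsto y Filter.atTop (nhds x) := hB.tendsto hy1
    have hcomp : IsCompact (insert x (Set.range y)) := hten.isCompact_insert_range
    obtain ⟨k, hk⟩ := hbd ⟨insert x (Set.range y), hcomp⟩ n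
    exact hy2 k (hk (Set.mem_insert_iff.2 (Or.inr ⟨k, rfl⟩)))
  -- Step 6: apply Menger of M to the covers by interiors
  obtain ⟨V', hV'sub, hV'univ⟩ := hM (fun n => Set.range (fun k => interior (S n k)))
    (by
      intro n
      constructor
      · rintro v ⟨k, rfl⟩
        exact isOpen_interior
      · apply Set.eq_univ_of_univ_subset
        intro x _
        obtain ⟨k, hk⟩ := hcoverM n x
        exact ⟨interior (S n k), ⟨k, rfl⟩, hk⟩)
  -- Step 7: extract a single index g n per cover
  have hg : ∀ n, ∃ g, ⋃₀ V' n ⊆ S n g := by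
    intro n
    obtain ⟨hsub', hfin⟩ := hV'sub n
    have hch : ∀ v ∈ V' n, ∃ k, v ⊆ S n k := by
      intro v hv
      obtain ⟨k, rfl⟩ := hsub' hv
      exact ⟨k, interior_subset⟩
    choose! kf hkf using hch
    obtain ⟨b, hb⟩ := (hfin.image kf).bddAbove
    refine ⟨b, ?_⟩
    rintro x ⟨v, hv, hxv⟩
    exact hSmono n (hb (Set.mem_image_of_mem kf hv)) (hkf v hv hxv)
  choose g hgS using hg
  -- Step 8: the compacts mapping into some W n (g n) cover M
  set 𝒞 : Set {K : Set M // IsCompact K} := {K | ∃ n, (φ K).1 ⊆ W n (g n)} with h𝒞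
  have h𝒞cov : ∀ x : M, ∃ C ∈ 𝒞, x ∈ C.1 := by
    intro x
    have : x ∈ ⋃ n, ⋃₀ V' n := hV'univ ▸ Set.mem_univ x
    obtain ⟨n, hn⟩ := Set.mem_iUnion.1 this
    obtain ⟨K, hxK, hK⟩ := hgS n hn
    exact ⟨K, ⟨n, hK⟩, hxK⟩
  -- Step 9: conclude
  refine ⟨fun n => u n '' Set.Iic (g n), fun n =>
    ⟨?_, (Set.finite_Iic (g n)).image _⟩, ?_⟩
  · rintro v ⟨m, _, rfl⟩
    exact hu1 n m
  · apply Set.eq_univ_of_univ_subset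
    intro y _
    obtain ⟨C, ⟨n, hC⟩, hyC⟩ := hφ 𝒞 h𝒞cov y
    refine Set.mem_iUnion.2 ⟨n, ?_⟩
    rw [Set.sUnion_image]
    exact hC hyC
end

section
/- Let M and N be separable metrizable spaces. Suppose there is a map φ : 𝒦(M) → 𝒦(N) such that whenever 𝒞 ⊆ 𝒦(M) has the property that every finite subset of M is contained in some member of 𝒞, then every finite subset of N is contained in some member of {φ(C) : C ∈ 𝒞} (that is, (ℱ(M),𝒦(M)) ≥_T (ℱ(N),𝒦(N))). If M is strong Menger then N is strong Menger. -/
/-- A space is strong Menger if every finite power is Menger. -/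
def StrongMengerSpace (X : Type*) [TopologicalSpace X] : Prop :=
  ∀ n : ℕ, MengerSpace (Fin n → X)

/-- If `M`, `N` are separable metrizable and `(ℱ(M),𝒦(M)) ≥_T (ℱ(N),𝒦(N))`, then `N` is
strong Menger whenever `M` is strong Menger. -/
theorem strongMenger_of_tukey_quotient
    {M N : Type*} [TopologicalSpace M] [TopologicalSpace N]
    [TopologicalSpace.MetrizableSpace M] [TopologicalSpace.SeparableSpace M]
    [TopologicalSpace.MetrizableSpace N] [TopologicalSpace.SeparableSpace N]
    (φ : {K : Set M // IsCompact K} → {K : Set N // IsCompact K})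
    (hφ : ∀ 𝒞 : Set {K : Set M // IsCompact K},
      (∀ F : Set M, F.Finite → ∃ C ∈ 𝒞, F ⊆ C.1) →
      ∀ G : Set N, G.Finite → ∃ C ∈ 𝒞, G ⊆ (φ C).1)
    (hM : StrongMengerSpace M) : StrongMengerSpace N := by
  classical
  -- Step 1: extract a "dual" map `s : N → finite subsets of M` with the absorption property
  have hs : ∀ y : N, ∃ F : Set M, F.Finite ∧
      ∀ C : {K : Set M // IsCompact K}, F ⊆ C.1 → y ∈ (φ C).1 := by
    intro y
    by_contra h
    push_neg at h
    choose c hc1 hc2 using h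
    obtain ⟨C, hC𝒞, hyC⟩ := hφ (Set.range fun F : {F : Set M // F.Finite} => c F.1 F.2)
      (fun F hF => ⟨c F hF, ⟨⟨F, hF⟩, rfl⟩, hc1 F hF⟩) {y} (Set.finite_singleton y)
    obtain ⟨F, rfl⟩ := hC𝒞
    exact hc2 F.1 F.2 (hyC (Set.mem_singleton y))
  choose s hsfin hsabs using hs
  letI : MetricSpace M := TopologicalSpace.metrizableSpaceMetric M
  letI : MetricSpace N := TopologicalSpace.metrizableSpaceMetric N
  intro k W hW
  -- the finite subset of M encoding a k-tuple of points of N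
  set S : (Fin k → N) → Set M := fun z => ⋃ i, s (z i) with hSdef
  have hSfin : ∀ z, (S z).Finite := fun z => Set.finite_iUnion fun i => hsfin (z i)
  -- the "preimage" operation
  set Pre : ∀ p : ℕ, Set (Fin p → M) → Set (Fin k → N) :=
    fun p A => {z | ∃ v ∈ A, S z ⊆ Set.range v} with hPredef
  have hPreMono : ∀ p : ℕ, ∀ A B : Set (Fin p → M), A ⊆ B → Pre p A ⊆ Pre p B := by
    rintro p A B hAB z ⟨v, hv, hvz⟩
    exact ⟨v, hAB hv, hvz⟩
  -- Core sequential compactness result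
  have core : ∀ (p : ℕ) (v : Fin p → M) (z : ℕ → Fin k → N),
      (∀ m, z m ∈ Pre p (Metric.ball v ((1/2 : ℝ) ^ m))) →
      ∃ x, (∀ m, x ∈ closure (Pre p (Metric.ball v ((1/2 : ℝ) ^ m)))) ∧
        ∃ g : ℕ → ℕ, StrictMono g ∧ Filter.Tendsto (z ∘ g) Filter.atTop (nhds x) := by
    intro p v z hz
    choose w hw1 hw2 using hz
    have hwv : Filter.Tendsto w Filter.atTop (nhds v) := by
      rw [tendsto_iff_dist_tendsto_zero]
      refine squeeze_zero (fun n => dist_nonneg) (fun n => (Metric.mem_ball.1 (hw1 n)).le) ?_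
      exact tendsto_pow_atTop_nhds_zero_of_lt_one (by norm_num) (by norm_num)
    have hK : IsCompact (insert v (Set.range w)) := hwv.isCompact_insert_range
    have hC : IsCompact (⋃ i : Fin p, (fun u : Fin p → M => u i) '' insert v (Set.range w)) :=
      isCompact_iUnion fun i => hK.image (continuous_apply i)
    set C : {K : Set M // IsCompact K} := ⟨_, hC⟩ with hCdef
    have hrange : ∀ m, Set.range (w m) ⊆ C.1 := by
      intro m x hx
      obtain ⟨i, rfl⟩ := hx
      exact Set.mem_iUnion.2 ⟨i, ⟨w m, Set.mem_insert_of_mem _ (Set.mem_range_self m), rfl⟩⟩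
    have hzD : ∀ m, z m ∈ Set.univ.pi fun _ : Fin k => (φ C).1 := by
      intro m
      rw [Set.mem_univ_pi]
      intro i
      refine hsabs (z m i) C ?_
      refine subset_trans ?_ (subset_trans (hw2 m) (hrange m))
      exact Set.subset_iUnion (fun j => s (z m j)) i
    obtain ⟨x, hx, g, hg, hgt⟩ :=
      (isCompact_univ_pi fun _ : Fin k => (φ C).2).tendsto_subseq hzD
    refine ⟨x, ?_, g, hg, hgt⟩
    intro m
    refine mem_closure_of_tendsto hgt ?_
    filter_upwards [Filter.eventually_ge_atTop m] with i hi
    refine hPreMono p _ _ (Metric.ball_subset_ball ?_) ⟨w (g i), hw1 (g i), hw2 (g i)⟩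
    exact pow_le_pow_of_le_one (by norm_num) (by norm_num) (le_trans hi hg.le_apply)
  -- compactness of the limiting set Q
  have hQcomp : ∀ (p : ℕ) (v : Fin p → M),
      IsCompact (⋂ m : ℕ, closure (Pre p (Metric.ball v ((1/2 : ℝ) ^ m)))) := by
    intro p v
    apply IsSeqCompact.isCompact
    intro u hu
    have happ : ∀ n : ℕ, ∃ z ∈ Pre p (Metric.ball v ((1/2 : ℝ) ^ n)),
        dist (u n) z < (1/2 : ℝ) ^ n := by
      intro n
      have h1 : u n ∈ closure (Pre p (Metric.ball v ((1/2 : ℝ) ^ n))) := by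
        have := hu n
        rw [Set.mem_iInter] at this
        exact this n
      exact Metric.mem_closure_iff.1 h1 _ (by positivity)
    choose z hz hdz using happ
    obtain ⟨x, hxQ, g, hg, hgt⟩ := core p v z hz
    refine ⟨x, Set.mem_iInter.2 hxQ, g, hg, ?_⟩
    rw [tendsto_iff_dist_tendsto_zero]
    have h1 : Filter.Tendsto (fun i => dist (u (g i)) (z (g i))) Filter.atTop (nhds 0) := by
      refine squeeze_zero (fun n => dist_nonneg) (fun n => (hdz (g n)).le) ?_
      exact (tendsto_pow_atTop_nhds_zero_of_lt_one (by norm_num) (by norm_num)).comp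
        hg.tendsto_atTop
    have h2 : Filter.Tendsto (fun i => dist (z (g i)) x) Filter.atTop (nhds 0) :=
      tendsto_iff_dist_tendsto_zero.1 hgt
    have h3 := h1.add h2
    rw [add_zero] at h3
    refine squeeze_zero (fun n => dist_nonneg) (fun n => dist_triangle _ _ _) h3
  -- the usco-type claim
  have claimA : ∀ (p : ℕ) (v : Fin p → M) (U : Set (Fin k → N)), IsOpen U →
      (⋂ m : ℕ, closure (Pre p (Metric.ball v ((1/2 : ℝ) ^ m)))) ⊆ U →
      ∃ m : ℕ, Pre p (Metric.ball v ((1/2 : ℝ) ^ m)) ⊆ U := by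
    intro p v U hUopen hQU
    by_contra h
    push_neg at h
    have h' : ∀ m : ℕ, ∃ z ∈ Pre p (Metric.ball v ((1/2 : ℝ) ^ m)), z ∉ U := fun m =>
      Set.not_subset.1 (h m)
    choose z hz hzU using h'
    obtain ⟨x, hxQ, g, hg, hgt⟩ := core p v z hz
    have hxU : x ∈ U := hQU (Set.mem_iInter.2 hxQ)
    obtain ⟨i, hi⟩ := (hgt.eventually_mem (hUopen.mem_nhds hxU)).exists
    exact hzU (g i) hi
  -- open covers of the powers of M
  set UU : ∀ p : ℕ, ℕ → Set (Set (Fin p → M)) := fun p j =>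
    {O : Set (Fin p → M) | IsOpen O ∧ ∃ 𝒲 : Set (Set (Fin k → N)),
      𝒲 ⊆ W (Nat.pair p j) ∧ 𝒲.Finite ∧ Pre p O ⊆ ⋃₀ 𝒲} with hUUdef
  have hUU : ∀ p j : ℕ, (∀ u ∈ UU p j, IsOpen u) ∧ ⋃₀ UU p j = Set.univ := by
    intro p j
    refine ⟨fun u hu => hu.1, Set.eq_univ_of_forall ?_⟩
    intro v
    have hQ := hQcomp p v
    have hcov : (⋂ m : ℕ, closure (Pre p (Metric.ball v ((1/2 : ℝ) ^ m)))) ⊆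
        ⋃ u : ↥(W (Nat.pair p j)), (u : Set (Fin k → N)) := by
      rw [← Set.sUnion_eq_iUnion, (hW (Nat.pair p j)).2]
      exact Set.subset_univ _
    obtain ⟨t, ht⟩ := hQ.elim_finite_subcover
      (fun u : ↥(W (Nat.pair p j)) => (u : Set (Fin k → N)))
      (fun u => (hW (Nat.pair p j)).1 u u.2) hcov
    obtain ⟨m, hm⟩ := claimA p v (⋃ u ∈ t, (u : Set (Fin k → N)))
      (isOpen_biUnion fun u _ => (hW (Nat.pair p j)).1 u u.2) ht
    refine Set.mem_sUnion.2 ⟨Metric.ball v ((1/2 : ℝ) ^ m),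
      ⟨Metric.isOpen_ball, Subtype.val '' (t : Set ↥(W (Nat.pair p j))), ?_, ?_, ?_⟩,
      Metric.mem_ball_self (by positivity)⟩
    · rintro _ ⟨u, hu, rfl⟩
      exact u.2
    · exact t.finite_toSet.image _
    · rwa [Set.sUnion_image]
  -- apply the Menger property of each power of M
  choose V hV1 hV2 using fun p : ℕ => hM p (fun j => UU p j) (fun j => hUU p j)
  -- witness extraction
  have hWitEx : ∀ (p j : ℕ) (O : Set (Fin p → M)), ∃ 𝒲 : Set (Set (Fin k → N)),
      𝒲 ⊆ W (Nat.pair p j) ∧ 𝒲.Finite ∧ (O ∈ UU p j → Pre p O ⊆ ⋃₀ 𝒲) := by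
    intro p j O
    by_cases h : O ∈ UU p j
    · obtain ⟨𝒲, h1, h2, h3⟩ := h.2
      exact ⟨𝒲, h1, h2, fun _ => h3⟩
    · exact ⟨∅, Set.empty_subset _, Set.finite_empty, fun h' => absurd h' h⟩
  choose Wit hWit1 hWit2 hWit3 using hWitEx
  refine ⟨fun n => ⋃ O ∈ V n.unpair.1 n.unpair.2, Wit n.unpair.1 n.unpair.2 O, ?_, ?_⟩
  · intro n
    constructor
    · intro x hx
      simp only [Set.mem_iUnion] at hx
      obtain ⟨O, hO, hx⟩ := hx
      have := hWit1 n.unpair.1 n.unpair.2 O hx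
      rwa [Nat.pair_unpair] at this
    · refine Set.Finite.biUnion (hV1 n.unpair.1 n.unpair.2).2 fun O hO => ?_
      exact hWit2 n.unpair.1 n.unpair.2 O
  · rw [Set.eq_univ_iff_forall]
    intro z
    obtain ⟨p, f, hf⟩ := (hSfin z).fin_embedding
    have hv : (⇑f : Fin p → M) ∈ ⋃ j, ⋃₀ V p j := by
      rw [hV2 p]
      exact Set.mem_univ _
    rw [Set.mem_iUnion] at hv
    obtain ⟨j, hj⟩ := hv
    rw [Set.mem_sUnion] at hj
    obtain ⟨O, hOV, hfO⟩ := hj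
    have hOU : O ∈ UU p j := (hV1 p j).1 hOV
    have hze : z ∈ Pre p O := ⟨⇑f, hfO, hf.ge⟩
    have hzW : z ∈ ⋃₀ Wit p j O := hWit3 p j O hOU hze
    rw [Set.mem_sUnion] at hzW
    obtain ⟨T, hT, hzT⟩ := hzW
    refine Set.mem_iUnion.2 ⟨Nat.pair p j, ?_⟩
    have hup : (Nat.pair p j).unpair = (p, j) := Nat.unpair_pair p j
    show z ∈ ⋃₀ ⋃ O ∈ V (Nat.pair p j).unpair.1 (Nat.pair p j).unpair.2,
      Wit (Nat.pair p j).unpair.1 (Nat.pair p j).unpair.2 O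
    rw [hup]
    exact Set.mem_sUnion.2 ⟨T, Set.mem_biUnion hOV hT, hzT⟩
end

section
/- Let M be a separable metrizable space. Then M is locally compact if and only if there is NO map φ : 𝒦(M) → (ℕ→ℕ) such that for every family S ⊆ 𝒦(M) that is cofinal in (𝒦(M),⊆) (every compact subset of M is contained in a member of S), the image {φ(K) : K ∈ S} is cofinal in (ℕ→ℕ) with the pointwise order. (That is, 𝒦(M) does not Tukey quotient to (ω^ω,𝒦(ω^ω)) exactly when M is locally compact.) -/
/-!
If `M` is locally compact it is σ-compact, so a compact exhaustion is a countable cofinal family in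
`𝒦(M)`; its image under any map is countable, and a diagonal function escapes it.

If `M` is not locally compact, some point `x` has no compact neighbourhood. Every closed ball
`B̄(x, 1/(n+1))` is then non-compact, so it carries a sequence `yₙ` meeting each compact set only
finitely often, and `φ K n := max {k | yₙ k ∈ K}` is well defined. For `g : ℕ → ℕ` the set
`{x} ∪ {yₙ k | k ≤ g n}` is compact (a sequence converging to `x`), and any compact `C` containing
it has `φ C ≥ g`.
-/

open Filter Set Metric Topology TopologicalSpace Function

def IsTukeyQuotientToBaire {X : Type*} [TopologicalSpace X]
    (φ : {K : Set X // IsCompact K} → (ℕ → ℕ)) : Prop :=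
  ∀ S : Set {K : Set X // IsCompact K}, (∀ K : {K : Set X // IsCompact K}, ∃ C ∈ S, K.1 ⊆ C.1) →
    ∀ g : ℕ → ℕ, ∃ C ∈ S, g ≤ φ C

theorem exists_forall_not_le (f : ℕ → ℕ → ℕ) : ∃ g : ℕ → ℕ, ∀ m, ¬g ≤ f m :=
  ⟨fun n ↦ f n n + 1, fun m h ↦ Nat.not_succ_le_self _ (h m)⟩

theorem not_exists_isTukeyQuotientToBaire_of_sigmaCompactSpace (X : Type*)
    [TopologicalSpace X] [WeaklyLocallyCompactSpace X] [SigmaCompactSpace X] :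
    ¬∃ φ : {K : Set X // IsCompact K} → (ℕ → ℕ), IsTukeyQuotientToBaire φ := by
  rintro ⟨φ, hφ⟩
  let E := CompactExhaustion.choice X
  let K (n : ℕ) : {K : Set X // IsCompact K} := ⟨E n, E.isCompact n⟩
  have hK : ∀ C : {K : Set X // IsCompact K}, ∃ D ∈ range K, C.1 ⊆ D.1 := fun C ↦
    let ⟨n, hn⟩ := E.exists_superset_of_isCompact C.2
    ⟨K n, mem_range_self n, hn⟩
  obtain ⟨g, hg⟩ := exists_forall_not_le (φ ∘ K)
  obtain ⟨_, ⟨m, rfl⟩, hm⟩ := hφ (range K) hK g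
  exact hg m hm

theorem exists_seq_tendsto_cocompact_of_not_isCompact {X : Type*} [TopologicalSpace X]
    [PseudoMetrizableSpace X] {s : Set X} (hs : IsClosed s) (hns : ¬IsCompact s) :
    ∃ y : ℕ → X, (∀ k, y k ∈ s) ∧ Tendsto y atTop (cocompact X) := by
  have : ¬IsSeqCompact s := fun h ↦ hns h.isCompact
  simp only [IsSeqCompact, not_forall, not_exists, not_and] at this
  obtain ⟨y, hys, hy⟩ := this
  refine ⟨y, hys, hasBasis_cocompact.tendsto_right_iff.2 fun K hK ↦ ?_⟩
  by_contra h
  simp only [not_eventually, mem_compl_iff, not_not] at h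
  obtain ⟨a, -, ψ, hψ, hlim⟩ := hK.isSeqCompact.subseq_of_frequently_in h
  exact hy a (hs.mem_of_tendsto hlim (Eventually.of_forall fun _ ↦ hys _)) ψ hψ hlim

theorem tendsto_subtype_snd_le_cofinite_atTop_prod_top (g : ℕ → ℕ) :
    Tendsto ((↑) : {p : ℕ × ℕ // p.2 ≤ g p.1} → ℕ × ℕ) cofinite (atTop ×ˢ ⊤) := by
  rw [prod_top, tendsto_comap_iff, ← Nat.cofinite_eq_atTop]
  refine Tendsto.cofinite_of_finite_preimage_singleton fun n ↦ Set.Finite.to_subtype ?_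
  refine (((finite_singleton n).prod (finite_Iic (g n))).preimage
    Subtype.val_injective.injOn).subset fun p (hp : p.1.1 = n) ↦ ?_
  exact ⟨hp, hp ▸ p.2⟩

theorem isCompact_insert_image_snd_le {X : Type*} [TopologicalSpace X] {x : X}
    {y : ℕ → ℕ → X} (hy : Tendsto (uncurry y) (atTop ×ˢ ⊤) (𝓝 x)) (g : ℕ → ℕ) :
    IsCompact (insert x (uncurry y '' {p | p.2 ≤ g p.1})) := by
  rw [image_eq_range]
  exact (hy.comp (tendsto_subtype_snd_le_cofinite_atTop_prod_top g))
    |>.isCompact_insert_range_of_cofinite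

theorem exists_isTukeyQuotientToBaire_of_tendsto_cocompact {X : Type*} [TopologicalSpace X]
    {x : X} {y : ℕ → ℕ → X} (hx : Tendsto (uncurry y) (atTop ×ˢ ⊤) (𝓝 x))
    (hy : ∀ n, Tendsto (y n) atTop (cocompact X)) :
    ∃ φ : {K : Set X // IsCompact K} → (ℕ → ℕ), IsTukeyQuotientToBaire φ := by
  refine ⟨fun K n ↦ sSup {k | y n k ∈ K.1}, fun S hS g ↦ ?_⟩
  obtain ⟨C, hCS, hC⟩ := hS ⟨_, isCompact_insert_image_snd_le hx g⟩
  have hyC (n : ℕ) : y n (g n) ∈ C.1 :=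
    hC (mem_insert_of_mem _ ⟨(n, g n), (le_rfl : g n ≤ g n), rfl⟩)
  refine ⟨C, hCS, fun n ↦ le_csSup ?_ (hyC n)⟩
  have : ∀ᶠ k in atTop, y n k ∉ C.1 := hy n (C.2.compl_mem_cocompact)
  rw [← Nat.cofinite_eq_atTop, eventually_cofinite] at this
  simpa using this.bddAbove

theorem exists_isTukeyQuotientToBaire_of_not_locallyCompactSpace {X : Type*}
    [PseudoMetricSpace X] (h : ¬LocallyCompactSpace X) :
    ∃ φ : {K : Set X // IsCompact K} → (ℕ → ℕ), IsTukeyQuotientToBaire φ := by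
  obtain ⟨x, hx⟩ : ∃ x : X, ∀ K ∈ 𝓝 x, ¬IsCompact K := by
    by_contra! H
    have : WeaklyLocallyCompactSpace X := ⟨fun x ↦ (H x).imp fun _ hK ↦ ⟨hK.2, hK.1⟩⟩
    exact h inferInstance
  choose y hyB hy using fun n : ℕ ↦ exists_seq_tendsto_cocompact_of_not_isCompact
    isClosed_closedBall (hx _ (closedBall_mem_nhds x (Nat.one_div_pos_of_nat (n := n))))
  refine exists_isTukeyQuotientToBaire_of_tendsto_cocompact (x := x) ?_ hy
  refine nhds_basis_closedBall_inv_nat_succ.tendsto_right_iff.2 fun i _ ↦ ?_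
  rw [prod_top, eventually_comap]
  filter_upwards [eventually_ge_atTop i] with n hn p rfl
  exact closedBall_subset_closedBall (by gcongr) (hyB p.1 p.2)

/-- A separable metrizable space `M` is locally compact iff `𝒦(M)` does not Tukey quotient
to `(ω^ω, 𝒦(ω^ω))`, i.e. to `(ℕ → ℕ)` with the pointwise order. -/
theorem locallyCompact_iff_compacts_not_tukey_quotient_to_baire
    (M : Type*) [TopologicalSpace M]
    [TopologicalSpace.MetrizableSpace M] [TopologicalSpace.SeparableSpace M] :
    LocallyCompactSpace M ↔
    ¬ ∃ φ : {K : Set M // IsCompact K} → (ℕ → ℕ),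
        ∀ S : Set {K : Set M // IsCompact K},
          (∀ K : {K : Set M // IsCompact K}, ∃ C ∈ S, K.1 ⊆ C.1) →
          ∀ g : ℕ → ℕ, ∃ C ∈ S, g ≤ φ C := by
  let := metrizableSpaceMetric M
  have := UniformSpace.secondCountable_of_separable M
  exact ⟨fun _ ↦ not_exists_isTukeyQuotientToBaire_of_sigmaCompactSpace M,
    not_imp_comm.1 exists_isTukeyQuotientToBaire_of_not_locallyCompactSpace⟩
end

section
/- Let M be a separable metrizable space. Then M is Menger if and only if there is NO map φ : 𝒦(M) → (ℕ→ℕ) such that for every compact cover 𝒞 of M the image {φ(C) : C ∈ 𝒞} is cofinal in (ℕ→ℕ) with the pointwise order. (That is, (M,𝒦(M)) does not Tukey quotient to (ω^ω,𝒦(ω^ω)) exactly when M is Menger.) -/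
/-- A separable metrizable space `M` is Menger iff `(M,𝒦(M))` does not Tukey quotient to
`(ω^ω, 𝒦(ω^ω))`, i.e. to `(ℕ → ℕ)` with the pointwise order. -/
theorem menger_iff_not_tukey_quotient_to_baire
    (M : Type*) [TopologicalSpace M]
    [TopologicalSpace.MetrizableSpace M] [TopologicalSpace.SeparableSpace M] :
    MengerSpace M ↔
    ¬ ∃ φ : {K : Set M // IsCompact K} → (ℕ → ℕ),
        ∀ 𝒞 : Set {K : Set M // IsCompact K},
          (∀ x : M, ∃ C ∈ 𝒞, x ∈ C.1) →
          ∀ g : ℕ → ℕ, ∃ C ∈ 𝒞, g ≤ φ C := by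
  letI : MetricSpace M := TopologicalSpace.metrizableSpaceMetric M
  haveI : SecondCountableTopology M := UniformSpace.secondCountable_of_separable M
  constructor
  · -- Menger → no Tukey quotient
    rintro hM ⟨φ, hφ⟩
    set E : ℕ → ℕ → Set M :=
      fun n k => {y | ∃ C : {K : Set M // IsCompact K}, y ∈ C.1 ∧ φ C n ≤ k} with hE
    set U : ℕ → Set (Set M) := fun n => {W : Set M | IsOpen W ∧ ∃ k, W ⊆ E n k} with hU
    have hcov : ∀ n, (∀ u ∈ U n, IsOpen u) ∧ ⋃₀ U n = Set.univ := by
      intro n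
      refine ⟨fun u hu => hu.1, Set.eq_univ_of_forall fun x => ?_⟩
      by_contra hx
      have hball : ∀ j : ℕ, ∃ z : M, z ∈ Metric.ball x (1 / (j + 1)) ∧ z ∉ E n j := by
        intro j
        by_contra hc
        push_neg at hc
        exact hx ⟨Metric.ball x (1 / (j + 1)),
          ⟨Metric.isOpen_ball, j, fun z hz => hc z hz⟩,
          Metric.mem_ball_self (by positivity)⟩
      choose z hz1 hz2 using hball
      have hlim : Filter.Tendsto z Filter.atTop (nhds x) := by
        rw [Metric.tendsto_atTop]
        intro ε hε
        obtain ⟨N, hN⟩ := exists_nat_one_div_lt hε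
        refine ⟨N, fun j hj => ?_⟩
        have h1 : dist (z j) x < 1 / (j + 1) := Metric.mem_ball.mp (hz1 j)
        have h2 : (1 : ℝ) / (j + 1) ≤ 1 / (N + 1) := by
          apply one_div_le_one_div_of_le (by positivity)
          exact_mod_cast Nat.succ_le_succ hj
        linarith
      have hK : IsCompact (insert x (Set.range z)) := hlim.isCompact_insert_range
      set k0 := φ ⟨insert x (Set.range z), hK⟩ n
      exact hz2 k0 ⟨⟨insert x (Set.range z), hK⟩, Or.inr ⟨k0, rfl⟩, le_refl _⟩
    obtain ⟨V, hV1, hV2⟩ := hM U hcov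
    classical
    set kf : ℕ → Set M → ℕ :=
      fun n W => if h : ∃ k, W ⊆ E n k then h.choose else 0 with hkf
    set g : ℕ → ℕ := fun n => ((hV1 n).2.toFinset).sup (kf n) with hg
    have hEg : ∀ x : M, ∃ n, x ∈ E n (g n) := by
      intro x
      have hx : x ∈ ⋃ n, ⋃₀ V n := hV2 ▸ Set.mem_univ x
      obtain ⟨_, ⟨n, rfl⟩, W, hWV, hxW⟩ := hx
      have hWU : W ∈ U n := (hV1 n).1 hWV
      have hk : ∃ k, W ⊆ E n k := hWU.2
      have hsub : W ⊆ E n (kf n W) := by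
        rw [hkf]; simp only [dif_pos hk]; exact hk.choose_spec
      have hle : kf n W ≤ g n :=
        Finset.le_sup ((hV1 n).2.mem_toFinset.mpr hWV)
      obtain ⟨C, hxC, hC⟩ := hsub hxW
      exact ⟨n, C, hxC, le_trans hC hle⟩
    obtain ⟨C, ⟨n, hn⟩, hdom⟩ :=
      hφ {C | ∃ n, φ C n ≤ g n}
        (fun x => by
          obtain ⟨n, C, hxC, hC⟩ := hEg x
          exact ⟨C, ⟨n, hC⟩, hxC⟩)
        (fun n => g n + 1)
    have h1 : g n + 1 ≤ φ C n := hdom n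
    omega
  · -- no Tukey quotient → Menger
    intro hno
    by_contra hM
    apply hno
    simp only [MengerSpace, not_forall] at hM
    obtain ⟨U, hU, hQ⟩ := hM
    push_neg at hQ
    -- M must be nonempty
    rcases isEmpty_or_nonempty M with hemp | hne
    · exfalso
      refine absurd ?_
        (hQ (fun _ => (∅ : Set (Set M))) (fun n => ⟨Set.empty_subset _, Set.finite_empty⟩))
      have : (Set.univ : Set M) = ∅ := Set.univ_eq_empty_iff.mpr hemp
      simp [this]
    · -- countable subcovers
      have hT : ∀ n, ∃ f : ℕ → Set M,
          Set.range f ⊆ U n ∧ ⋃ j, f j = Set.univ := by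
        intro n
        obtain ⟨T, hTc, hTU, hTeq⟩ := TopologicalSpace.isOpen_sUnion_countable (U n) (hU n).1
        have hTuniv : ⋃₀ T = Set.univ := hTeq.trans (hU n).2
        have hTne : T.Nonempty := by
          rcases Set.eq_empty_or_nonempty T with h | h
          · exfalso
            rw [h, Set.sUnion_empty] at hTuniv
            exact (Set.univ_nonempty (α := M)).ne_empty hTuniv.symm
          · exact h
        obtain ⟨f, hf⟩ := hTc.exists_eq_range hTne
        refine ⟨f, ?_, ?_⟩
        · rw [← hf]; exact hTU
        · rw [← Set.sUnion_range, ← hf]; exact hTuniv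
      choose f hfU hfuniv using hT
      set Vset : ℕ → ℕ → Set M := fun n k => ⋃ j ≤ k, f n j with hVset
      have hVmono : ∀ n, ∀ k k', k ≤ k' → Vset n k ⊆ Vset n k' := by
        intro n k k' hkk x hx
        simp only [hVset, Set.mem_iUnion] at hx ⊢
        obtain ⟨j, hj, hxs⟩ := hx
        exact ⟨j, le_trans hj hkk, hxs⟩
      have hex : ∀ (C : {K : Set M // IsCompact K}) (n : ℕ), ∃ k, C.1 ⊆ Vset n k := by
        intro C n
        have hcov : C.1 ⊆ ⋃ j, f n j := by rw [hfuniv n]; exact Set.subset_univ _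
        obtain ⟨s, hs⟩ := C.2.elim_finite_subcover (f n)
          (fun j => (hU n).1 _ (hfU n ⟨j, rfl⟩)) hcov
        refine ⟨s.sup id, fun x hx => ?_⟩
        have hj := hs hx
        simp only [hVset, Set.mem_iUnion] at hj ⊢
        obtain ⟨j, hjs, hxj⟩ := hj
        exact ⟨j, Finset.le_sup (f := id) hjs, hxj⟩
      refine ⟨fun C n => (hex C n).choose, fun 𝒞 hcov g => ?_⟩
      -- the failing selection for g
      have hsel : ∀ n, (f n) '' (Set.Iic (g n)) ⊆ U n ∧ ((f n) '' (Set.Iic (g n))).Finite :=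
        fun n => ⟨fun W ⟨j, _, hj⟩ => hj ▸ hfU n ⟨j, rfl⟩,
          (Set.finite_Iic (g n)).image _⟩
      have hne' : (⋃ n, ⋃₀ ((f n) '' (Set.Iic (g n)))) ≠ Set.univ :=
        hQ (fun n => (f n) '' (Set.Iic (g n))) hsel
      obtain ⟨x, hx⟩ := (Set.ne_univ_iff_exists_notMem _).mp hne'
      have hxV : ∀ n, x ∉ Vset n (g n) := by
        intro n hxn
        apply hx
        simp only [hVset, Set.mem_iUnion] at hxn
        obtain ⟨j, hjg, hxj⟩ := hxn
        exact Set.mem_iUnion.mpr ⟨n, f n j, ⟨j, hjg, rfl⟩, hxj⟩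
      obtain ⟨C, hC𝒞, hxC⟩ := hcov x
      refine ⟨C, hC𝒞, fun n => ?_⟩
      by_contra hlt
      push_neg at hlt
      exact hxV n (hVmono n _ _ (le_of_lt hlt) ((hex C n).choose_spec hxC))
end

section
/- Let M be a separable metrizable space. Then M is strong Menger (every finite power M^n is Menger) if and only if there is NO map φ : 𝒦(M) → (ℕ→ℕ) such that whenever 𝒞 ⊆ 𝒦(M) has the property that every finite subset of M is contained in some member of 𝒞, the image {φ(C) : C ∈ 𝒞} is cofinal in (ℕ→ℕ) with the pointwise order. (That is, (ℱ(M),𝒦(M)) does not Tukey quotient to (ω^ω,𝒦(ω^ω)) exactly when M is strong Menger.) -/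
open Set Metric

universe u

/-- A set whose points accumulate only on a finite subset `F` of itself is compact. -/
lemma isCompact_of_finite_far {X : Type u} [MetricSpace X] (F C : Set X) (hF : F.Finite)
    (hFC : F ⊆ C)
    (h : ∀ ε : ℝ, 0 < ε → (C \ ⋃ p ∈ F, Metric.ball p ε).Finite) : IsCompact C := by
  classical
  rcases C.eq_empty_or_nonempty with rfl | ⟨c0, hc0⟩
  · exact isCompact_empty
  refine isCompact_of_finite_subcover fun {ι} U hUo hUc => ?_
  haveI : Nonempty ι := ⟨(mem_iUnion.1 (hUc hc0)).choose⟩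
  have hsel : ∀ p : X, p ∈ F → ∃ i : ι, ∃ ε : ℝ, 0 < ε ∧ Metric.ball p ε ⊆ U i := by
    intro p hp
    obtain ⟨i, hi⟩ := mem_iUnion.1 (hUc (hFC hp))
    obtain ⟨ε, hε, hb⟩ := Metric.isOpen_iff.1 (hUo i) p hi
    exact ⟨i, ε, hε, hb⟩
  choose! ind rad hrad hball using hsel
  -- a positive ε below all the radii
  obtain ⟨ε, hε0, hεle⟩ : ∃ ε : ℝ, 0 < ε ∧ ∀ p ∈ F, ε ≤ rad p := by
    have hfin : (insert (1 : ℝ) (rad '' F)).Finite := (hF.image rad).insert 1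
    have hsne : hfin.toFinset.Nonempty := by
      rw [Set.Finite.toFinset_nonempty]; exact ⟨1, mem_insert _ _⟩
    refine ⟨hfin.toFinset.min' hsne, ?_, ?_⟩
    · have hmem := hfin.toFinset.min'_mem hsne
      rw [Set.Finite.mem_toFinset] at hmem
      rcases hmem with h1 | ⟨p, hp, hpe⟩
      · rw [h1]; norm_num
      · rw [← hpe]; exact hrad p hp
    · intro p hp
      exact Finset.min'_le _ _ (by rw [Set.Finite.mem_toFinset]; exact mem_insert_of_mem _ ⟨p, hp, rfl⟩)
  have hlef : (C \ ⋃ p ∈ F, Metric.ball p ε).Finite := h ε hε0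
  have hsel2 : ∀ q : X, q ∈ C \ ⋃ p ∈ F, Metric.ball p ε → ∃ i : ι, q ∈ U i := by
    intro q hq
    exact mem_iUnion.1 (hUc hq.1)
  choose! jnd hjnd using hsel2
  refine ⟨hF.toFinset.image ind ∪ hlef.toFinset.image jnd, ?_⟩
  intro c hc
  rw [Set.mem_iUnion₂]
  by_cases hcb : c ∈ ⋃ p ∈ F, Metric.ball p ε
  · obtain ⟨p, hp, hcp⟩ := mem_iUnion₂.1 hcb
    refine ⟨ind p, ?_, ?_⟩
    · exact Finset.mem_union_left _ (Finset.mem_image.2 ⟨p, hF.mem_toFinset.2 hp, rfl⟩)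
    · apply hball p hp
      exact Metric.mem_ball.2 (lt_of_lt_of_le (Metric.mem_ball.1 hcp) (hεle p hp))
  · refine ⟨jnd c, ?_, hjnd c ⟨hc, hcb⟩⟩
    exact Finset.mem_union_right _ (Finset.mem_image.2 ⟨c, hlef.mem_toFinset.2 ⟨hc, hcb⟩, rfl⟩)

/-- A separable metrizable space `M` is strong Menger iff `(ℱ(M),𝒦(M))` does not Tukey
quotient to `(ω^ω, 𝒦(ω^ω))`, i.e. to `(ℕ → ℕ)` with the pointwise order. -/
theorem strongMenger_iff_not_tukey_quotient_to_baire
    (M : Type*) [TopologicalSpace M]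
    [TopologicalSpace.MetrizableSpace M] [TopologicalSpace.SeparableSpace M] :
    StrongMengerSpace M ↔
    ¬ ∃ φ : {K : Set M // IsCompact K} → (ℕ → ℕ),
        ∀ 𝒞 : Set {K : Set M // IsCompact K},
          (∀ F : Set M, F.Finite → ∃ C ∈ 𝒞, F ⊆ C.1) →
          ∀ g : ℕ → ℕ, ∃ C ∈ 𝒞, g ≤ φ C := by
  constructor
  · intro hSM
    rintro ⟨φ, hφ⟩
    classical
    letI : MetricSpace M := TopologicalSpace.metrizableSpaceMetric M
    set h : Set M → ℕ → ℕ := fun F k =>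
      sInf {v | ∃ C : Set M, ∃ hC : IsCompact C, F ⊆ C ∧ φ ⟨C, hC⟩ k = v} with hh
    have hne : ∀ F : Set M, F.Finite → ∀ k,
        {v | ∃ C : Set M, ∃ hC : IsCompact C, F ⊆ C ∧ φ ⟨C, hC⟩ k = v}.Nonempty :=
      fun F hF k => ⟨φ ⟨F, hF.isCompact⟩ k, F, hF.isCompact, subset_rfl, rfl⟩
    have hle : ∀ (F : Set M) (k : ℕ) (C : Set M) (hC : IsCompact C),
        F ⊆ C → h F k ≤ φ ⟨C, hC⟩ k :=
      fun F k C hC hFC => Nat.sInf_le ⟨C, hC, hFC, rfl⟩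
    set 𝒰 : ℕ → Set (Set M) := fun m =>
      {W | IsOpen W ∧ ∃ c : ℕ, ∀ F : Set M, F.Finite → F ⊆ W → h F m ≤ c} with h𝒰
    -- the key ω-cover property
    have homega : ∀ (m : ℕ) (F : Set M), F.Finite → ∃ W ∈ 𝒰 m, F ⊆ W := by
      intro m F hF
      by_contra hcon
      push_neg at hcon
      have key : ∀ j : ℕ, ∃ F' : Set M, F'.Finite ∧
          F' ⊆ (⋃ p ∈ F, Metric.ball p ((j + 1 : ℝ)⁻¹)) ∧ j < h F' m := by
        intro j
        have hUo : IsOpen (⋃ p ∈ F, Metric.ball p ((j + 1 : ℝ)⁻¹)) :=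
          isOpen_biUnion fun p _ => Metric.isOpen_ball
        have hFU : F ⊆ ⋃ p ∈ F, Metric.ball p ((j + 1 : ℝ)⁻¹) := fun p hp =>
          mem_biUnion hp (Metric.mem_ball_self (by positivity))
        have hUnot : ¬ ∃ c : ℕ, ∀ F' : Set M, F'.Finite →
            F' ⊆ (⋃ p ∈ F, Metric.ball p ((j + 1 : ℝ)⁻¹)) → h F' m ≤ c := by
          rintro ⟨c, hc⟩
          exact hcon _ ⟨hUo, c, hc⟩ hFU
        push_neg at hUnot
        obtain ⟨F', h1, h2, h3⟩ := hUnot j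
        exact ⟨F', h1, h2, h3⟩
      choose Fj hFjf hFjU hFjgt using key
      have hFC : F ⊆ F ∪ ⋃ j, Fj j := subset_union_left
      have hCc : IsCompact (F ∪ ⋃ j, Fj j) := by
        apply isCompact_of_finite_far F _ hF hFC
        intro ε hε
        obtain ⟨J, hJ⟩ := exists_nat_one_div_lt hε
        have hsub : (F ∪ ⋃ j, Fj j) \ (⋃ p ∈ F, Metric.ball p ε) ⊆ ⋃ j ∈ Set.Iio J, Fj j := by
          rintro x ⟨hxC, hxn⟩
          rcases hxC with hxF | hxU
          · exact absurd (mem_biUnion hxF (Metric.mem_ball_self hε)) hxn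
          · obtain ⟨j, hj⟩ := mem_iUnion.1 hxU
            rcases lt_or_ge j J with hjJ | hjJ
            · exact mem_biUnion hjJ hj
            · exfalso
              apply hxn
              obtain ⟨p, hp, hxp⟩ := mem_iUnion₂.1 (hFjU j hj)
              refine mem_biUnion hp (Metric.mem_ball.2 ?_)
              have h1 : dist x p < (j + 1 : ℝ)⁻¹ := Metric.mem_ball.1 hxp
              have h2 : ((j : ℝ) + 1)⁻¹ ≤ ((J : ℝ) + 1)⁻¹ := by
                apply inv_anti₀ (by positivity)
                exact_mod_cast Nat.succ_le_succ hjJ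
              have h3 : ((J : ℝ) + 1)⁻¹ < ε := by
                rw [inv_eq_one_div]
                exact hJ
              linarith
        exact ((Set.finite_Iio J).biUnion fun j _ => hFjf j).subset hsub
      have hjle : h (Fj (φ ⟨_, hCc⟩ m)) m ≤ φ ⟨_, hCc⟩ m :=
        hle _ m _ hCc (fun x hx => Or.inr (mem_iUnion.2 ⟨_, hx⟩))
      have := hFjgt (φ ⟨_, hCc⟩ m)
      omega
    -- powers
    set pow : ∀ n : ℕ, Set M → Set (Fin n → M) := fun n W => {x | ∀ i, x i ∈ W} with hpow
    have hWcov : ∀ n k, (∀ u ∈ (pow n) '' (𝒰 (Nat.pair n k)), IsOpen u) ∧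
        ⋃₀ ((pow n) '' (𝒰 (Nat.pair n k))) = univ := by
      intro n k
      constructor
      · rintro u ⟨W, hW, rfl⟩
        have heq : pow n W = ⋂ i, (fun x : Fin n → M => x i) ⁻¹' W := by
          ext x; simp [hpow]
        rw [heq]
        exact isOpen_iInter_of_finite fun i => (hW.1).preimage (continuous_apply i)
      · refine eq_univ_of_forall fun x => ?_
        obtain ⟨W, hW, hsub⟩ := homega (Nat.pair n k) (Set.range x) (Set.finite_range x)
        exact ⟨pow n W, ⟨W, hW, rfl⟩, fun i => hsub ⟨i, rfl⟩⟩
    have hMeng := fun n => hSM n (fun k => (pow n) '' (𝒰 (Nat.pair n k))) (hWcov n)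
    choose V hV using hMeng
    have hS : ∀ n k, ∃ S ⊆ 𝒰 (Nat.pair n k), S.Finite ∧ V n k ⊆ (pow n) '' S := by
      intro n k
      have := Set.exists_subset_image_finite_and (f := pow n) (s := 𝒰 (Nat.pair n k))
        (p := fun t => V n k ⊆ t)
      exact this.1 ⟨V n k, ((hV n).1 k).1, ((hV n).1 k).2, subset_rfl⟩
    choose S hS𝒰 hSfin hSV using hS
    set cb : ℕ → Set M → ℕ := fun m W =>
      if hW : W ∈ 𝒰 m then Classical.choose hW.2 else 0 with hcb
    have hcbspec : ∀ (m : ℕ) (W : Set M) (hW : W ∈ 𝒰 m),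
        ∀ F : Set M, F.Finite → F ⊆ W → h F m ≤ cb m W := by
      intro m W hW F hF hFW
      have : cb m W = Classical.choose hW.2 := by rw [hcb]; simp only [dif_pos hW]
      rw [this]
      exact Classical.choose_spec hW.2 F hF hFW
    set g : ℕ → ℕ := fun m =>
      sSup ((cb m '' S (Nat.unpair m).1 (Nat.unpair m).2) ∪ {h ∅ m}) + 1 with hg
    have hfing : ∀ m, ((cb m '' S (Nat.unpair m).1 (Nat.unpair m).2) ∪ {h ∅ m}).Finite :=
      fun m => ((hSfin _ _).image _).union (finite_singleton _)
    have hgb : ∀ (m : ℕ) (W : Set M), W ∈ S (Nat.unpair m).1 (Nat.unpair m).2 → cb m W < g m := by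
      intro m W hW
      have h1 : cb m W ≤ sSup ((cb m '' S (Nat.unpair m).1 (Nat.unpair m).2) ∪ {h ∅ m}) :=
        le_csSup (hfing m).bddAbove (Or.inl ⟨W, hW, rfl⟩)
      have h2 : g m = sSup ((cb m '' S (Nat.unpair m).1 (Nat.unpair m).2) ∪ {h ∅ m}) + 1 := by
        rw [hg]
      omega
    have hgem : ∀ m, h ∅ m < g m := by
      intro m
      have h1 : h ∅ m ≤ sSup ((cb m '' S (Nat.unpair m).1 (Nat.unpair m).2) ∪ {h ∅ m}) :=
        le_csSup (hfing m).bddAbove (Or.inr rfl)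
      have h2 : g m = sSup ((cb m '' S (Nat.unpair m).1 (Nat.unpair m).2) ∪ {h ∅ m}) + 1 := by
        rw [hg]
      omega
    have hmain : ∀ F : Set M, F.Finite → ∃ m, h F m < g m := by
      intro F hF
      rcases F.eq_empty_or_nonempty with rfl | hFne
      · exact ⟨0, hgem 0⟩
      · set l := hF.toFinset.toList with hl
        set x : Fin l.length → M := fun i => l.get i with hxdef
        have hx : Set.range x = F := by
          ext a
          simp only [Set.mem_range, hxdef]
          rw [← List.mem_iff_get, hl, Finset.mem_toList, Set.Finite.mem_toFinset]
        have hxmem : x ∈ (univ : Set (Fin l.length → M)) := mem_univ x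
        rw [← (hV l.length).2] at hxmem
        obtain ⟨k, hk⟩ := mem_iUnion.1 hxmem
        obtain ⟨W, hWV, hxW⟩ := hk
        obtain ⟨Wo, hWS, rfl⟩ := hSV l.length k hWV
        have hFW : F ⊆ Wo := by
          rw [← hx]
          rintro a ⟨i, rfl⟩
          exact hxW i
        refine ⟨Nat.pair l.length k, ?_⟩
        have hW𝒰 : Wo ∈ 𝒰 (Nat.pair l.length k) := hS𝒰 l.length k hWS
        have h1 : h F (Nat.pair l.length k) ≤ cb (Nat.pair l.length k) Wo :=
          hcbspec _ _ hW𝒰 F hF hFW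
        have h2 : cb (Nat.pair l.length k) Wo < g (Nat.pair l.length k) := by
          apply hgb
          rw [Nat.unpair_pair]
          exact hWS
        omega
    -- final contradiction
    have hcof : ∀ F : Set M, F.Finite →
        ∃ C ∈ {C : {K : Set M // IsCompact K} | ∃ k, φ C k < g k}, F ⊆ C.1 := by
      intro F hF
      obtain ⟨m, hm⟩ := hmain F hF
      have hmem : h F m ∈ {v | ∃ C : Set M, ∃ hC : IsCompact C, F ⊆ C ∧ φ ⟨C, hC⟩ m = v} :=
        Nat.sInf_mem (hne F hF m)
      obtain ⟨C, hC, hFC, hφC⟩ := hmem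
      refine ⟨⟨C, hC⟩, ⟨m, ?_⟩, hFC⟩
      rw [hφC]
      exact hm
    obtain ⟨C, hC𝒞, hgle⟩ := hφ _ hcof g
    obtain ⟨k, hk⟩ := hC𝒞
    exact absurd (hgle k) (not_le.2 hk)
  · -- if no Tukey quotient then strong Menger (contrapositive)
    intro hno
    by_contra hSM
    apply hno
    simp only [StrongMengerSpace, not_forall] at hSM
    obtain ⟨n, hn⟩ := hSM
    rw [MengerSpace] at hn
    push_neg at hn
    obtain ⟨U, hUcov, hUbad⟩ := hn
    classical
    letI : MetricSpace M := TopologicalSpace.metrizableSpaceMetric M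
    haveI : SecondCountableTopology M := UniformSpace.secondCountable_of_separable M
    have hXne : Nonempty (Fin n → M) := by
      by_contra hne
      rw [not_nonempty_iff] at hne
      exact hUbad (fun _ => ∅) (fun k => ⟨empty_subset _, finite_empty⟩)
        (by simp [Set.eq_empty_of_isEmpty (univ : Set (Fin n → M))])
    have hT : ∀ k, ∃ T ⊆ U k, T.Countable ∧ ⋃₀ T = univ := by
      intro k
      obtain ⟨T, hTc, hTsub, hTu⟩ := TopologicalSpace.isOpen_sUnion_countable (U k) (hUcov k).1
      exact ⟨T, hTsub, hTc, by rw [hTu, (hUcov k).2]⟩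
    choose T hTsub hTc hTu using hT
    have hTne : ∀ k, (T k).Nonempty := by
      intro k
      rcases Set.eq_empty_or_nonempty (T k) with he | h
      · exfalso
        have := hTu k
        rw [he] at this
        simp only [sUnion_empty] at this
        exact Set.empty_ne_univ this
      · exact h
    choose f hf using fun k => Set.Countable.exists_eq_range (hTc k) (hTne k)
    have hfopen : ∀ k i, IsOpen (f k i) := fun k i =>
      (hUcov k).1 _ (hTsub k (by rw [hf k]; exact ⟨i, rfl⟩))
    have hfcov : ∀ k, (⋃ i, f k i) = univ := fun k => by
      rw [← Set.sUnion_range, ← hf k, hTu k]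
    have hkey : ∀ (C : {K : Set M // IsCompact K}) (k : ℕ), ∃ m : ℕ,
        {x : Fin n → M | ∀ i, x i ∈ C.1} ⊆ ⋃ i ∈ Finset.range m, f k i := by
      intro C k
      have hcomp : IsCompact {x : Fin n → M | ∀ i, x i ∈ C.1} := by
        have h2 := isCompact_univ_pi (fun _ : Fin n => C.2)
        convert h2 using 1
        ext x
        simp [Set.mem_univ_pi]
      obtain ⟨t, ht⟩ := hcomp.elim_finite_subcover (f k) (hfopen k)
        (by rw [hfcov k]; exact subset_univ _)
      refine ⟨t.sup id + 1, ht.trans ?_⟩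
      refine Set.iUnion₂_subset fun i hi => ?_
      exact Set.subset_biUnion_of_mem
        (Finset.mem_range.2 (Nat.lt_succ_of_le (Finset.le_sup (f := id) hi)))
    refine ⟨fun C k => Nat.find (hkey C k), ?_⟩
    intro 𝒞 hcof g
    set V : ℕ → Set (Set (Fin n → M)) := fun k => f k '' {i | i < g k} with hV
    have hVprop : ∀ k, V k ⊆ U k ∧ (V k).Finite := by
      intro k
      constructor
      · rintro _ ⟨i, hi, rfl⟩
        exact hTsub k (by rw [hf k]; exact ⟨i, rfl⟩)
      · exact (Set.finite_Iio _).image _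
    have hVne := hUbad V hVprop
    obtain ⟨x, hx⟩ : ∃ x, x ∉ ⋃ k, ⋃₀ V k := by
      by_contra hc
      push_neg at hc
      exact hVne (eq_univ_of_forall hc)
    obtain ⟨C, hC𝒞, hFC⟩ := hcof (Set.range x) (Set.finite_range x)
    refine ⟨C, hC𝒞, fun k => ?_⟩
    by_contra hlt
    push_neg at hlt
    have hfind := Nat.find_spec (hkey C k)
    have hxC : x ∈ {x : Fin n → M | ∀ i, x i ∈ C.1} := fun i => hFC ⟨i, rfl⟩
    have hxm := hfind hxC
    rw [Set.mem_iUnion₂] at hxm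
    obtain ⟨i, hi, hxi⟩ := hxm
    apply hx
    exact Set.mem_iUnion.2 ⟨k, ⟨f k i,
      ⟨i, lt_trans (Finset.mem_range.1 hi) hlt, rfl⟩, hxi⟩⟩
end

section
/- Let X be a Lindelöf topological space. If there is NO map φ : 𝒦(X) → (ℕ→ℕ) such that for every compact cover 𝒞 of X the image {φ(C) : C ∈ 𝒞} is cofinal in (ℕ→ℕ) with the pointwise order, then X is Menger. -/
/-- For a Lindelöf space `X`, if `(X,𝒦(X))` does not Tukey quotient to
`(ℕ → ℕ)` with the pointwise order, then `X` is Menger. -/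
theorem menger_of_lindelof_not_tukey_quotient_to_baire
    (X : Type*) [TopologicalSpace X] [LindelofSpace X]
    (h : ¬ ∃ φ : {K : Set X // IsCompact K} → (ℕ → ℕ),
        ∀ 𝒞 : Set {K : Set X // IsCompact K},
          (∀ x : X, ∃ C ∈ 𝒞, x ∈ C.1) →
          ∀ g : ℕ → ℕ, ∃ C ∈ 𝒞, g ≤ φ C) :
    MengerSpace X := by
  classical
  by_cases hX : Nonempty X
  · intro U hU
    by_contra hV
    push_neg at hV
    apply h
    -- replace each cover by a countable subcover
    have hsub : ∀ n, ∃ f : ℕ → Set X, (∀ i, f i ∈ U n) ∧ ⋃ i, f i = Set.univ := by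
      intro n
      have hcov : (Set.univ : Set X) ⊆ ⋃ i : (U n), (i : Set X) := by
        rw [← Set.sUnion_eq_iUnion, (hU n).2]
      obtain ⟨r, hrc, hr⟩ := isLindelof_univ.elim_countable_subcover
        (fun i : (U n) => (i : Set X)) (fun i => (hU n).1 i i.2) hcov
      have hWc : (Subtype.val '' r : Set (Set X)).Countable := hrc.image _
      have hWne : (Subtype.val '' r : Set (Set X)).Nonempty := by
        rcases hX with ⟨x⟩
        have hx : x ∈ ⋃ i ∈ r, (i : Set X) := hr (Set.mem_univ x)
        simp only [Set.mem_iUnion] at hx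
        obtain ⟨i, hi, _⟩ := hx
        exact ⟨i, ⟨i, hi, rfl⟩⟩
      obtain ⟨f, hf⟩ := hWc.exists_eq_range hWne
      refine ⟨f, ?_, ?_⟩
      · intro i
        have : f i ∈ Subtype.val '' r := hf ▸ Set.mem_range_self i
        obtain ⟨j, _, hj⟩ := this
        exact hj ▸ j.2
      · apply Set.eq_univ_of_univ_subset
        intro x hx
        have hx' : x ∈ ⋃ i ∈ r, (i : Set X) := hr hx
        simp only [Set.mem_iUnion] at hx'
        obtain ⟨i, hi, hxi⟩ := hx'
        have : (i : Set X) ∈ Set.range f := hf ▸ ⟨i, hi, rfl⟩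
        obtain ⟨k, hk⟩ := this
        exact Set.mem_iUnion.2 ⟨k, hk ▸ hxi⟩
    choose f hfU hfcov using hsub
    have hex : ∀ (K : {K : Set X // IsCompact K}) (n : ℕ),
        ∃ m, K.1 ⊆ ⋃ i ∈ Finset.range (m + 1), f n i := by
      intro K n
      obtain ⟨t, ht⟩ := K.2.elim_finite_subcover (f n)
        (fun i => (hU n).1 _ (hfU n i)) (by rw [hfcov n]; exact Set.subset_univ _)
      refine ⟨t.sup id, ht.trans ?_⟩
      intro x hx
      simp only [Set.mem_iUnion] at hx ⊢
      obtain ⟨i, hi, hxi⟩ := hx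
      exact ⟨i, Finset.mem_range.2 (Nat.lt_succ_of_le (Finset.le_sup (f := id) hi)), hxi⟩
    refine ⟨fun K n => sInf {m | K.1 ⊆ ⋃ i ∈ Finset.range (m + 1), f n i}, ?_⟩
    intro 𝒞 hcov g
    set V : ℕ → Set (Set X) := fun n => f n '' Set.Iic (g n) with hVdef
    have hVsub : ∀ n, V n ⊆ U n ∧ (V n).Finite := by
      intro n
      constructor
      · rintro _ ⟨i, _, rfl⟩; exact hfU n i
      · exact (Set.finite_Iic _).image _
    have hne := hV V hVsub
    have : ∃ x : X, x ∉ ⋃ n, ⋃₀ V n := by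
      by_contra hc
      push_neg at hc
      exact hne (Set.eq_univ_of_forall hc)
    obtain ⟨x, hx⟩ := this
    obtain ⟨C, hC, hxC⟩ := hcov x
    refine ⟨C, hC, fun n => ?_⟩
    by_contra hgn
    push_neg at hgn
    have hfind : C.1 ⊆ ⋃ i ∈ Finset.range
        (sInf {m | C.1 ⊆ ⋃ i ∈ Finset.range (m + 1), f n i} + 1), f n i :=
      Nat.sInf_mem (hex C n)
    have := hfind hxC
    simp only [Set.mem_iUnion] at this
    obtain ⟨i, hi, hxi⟩ := this
    have hi' := Finset.mem_range.mp hi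
    apply hx
    refine Set.mem_iUnion.2 ⟨n, ?_⟩
    exact ⟨f n i, ⟨i, (Nat.le_of_lt_succ hi').trans hgn.le, rfl⟩, hxi⟩
  · intro U _
    refine ⟨fun _ => ∅, fun n => ⟨Set.empty_subset _, Set.finite_empty⟩, ?_⟩
    exact Set.eq_univ_of_forall fun x => absurd ⟨x⟩ hX
end

section
/- Let M be a separable metrizable space. Then there is a map φ : 𝒦(ℚ) → 𝒦(M) such that for every family S cofinal in (𝒦(ℚ),⊆) the image {φ(K) : K ∈ S} is a compact cover of M, if and only if M is Σ¹₂, i.e., there exist a Polish space Z, a subset A ⊆ Z whose complement Z \ A is analytic, and a continuous surjection from A (with the subspace topology) onto M. -/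
/-!
Both conditions are equivalent to `M` having a `𝒦(ℚ)`-directed compact cover: an
inclusion-preserving map `ψ` from subsets of `ℚ` to subsets of `M`, compact-valued on compact sets,
whose values on compact sets cover `M`. A Tukey map `φ` gives one by `ψ K = ⋂ {φ C | K ⊆ C}`, and
such a `ψ` is itself a Tukey map.

Given `ψ`, the compact subsets of `ℝ` contained in `ℚ` form a coanalytic subset of the Polish
space `𝒦(ℝ)`, and over it the closure of `{(K, x) | x ∈ ψ (K ∩ ℚ)}` in `𝒦(ℝ) × M̂` is a coanalytic
set which maps continuously onto `M`: if `(Kₙ, xₙ) → (K, w)`, then `K ∪ ⋃ Kₙ` is compact, and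
`ψ` of it is a compact set containing every `xₙ`, hence `w`.

Conversely, a coanalytic subset `A` of the Baire space is the set of points whose tree (built
from a parametrisation of the complement) has no infinite branch. Finite sequences are labelled
by dyadic rationals so that the labels along any branch converge to an irrational number. The
labels of a tree without branches then form a compact subset of `ℚ`, and sending a compact
`K ⊆ ℚ` to the points whose tree has all its labels in `K` (and whose coordinates are bounded in
terms of `K`) is a `𝒦(ℚ)`-directed compact cover of `A`, which pushes forward to `M`.
-/

open Filter Topology Set TopologicalSpace MeasureTheory PiNat

universe u

def HasCompactsDirectedCover (X M : Type*) [TopologicalSpace X] [TopologicalSpace M] : Prop :=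
  ∃ ψ : Set X → Set M, Monotone ψ ∧ (∀ K, IsCompact K → IsCompact (ψ K)) ∧
    ∀ x, ∃ K, IsCompact K ∧ x ∈ ψ K

theorem HasCompactsDirectedCover.map {X Y M : Type*} [TopologicalSpace X] [TopologicalSpace Y]
    [TopologicalSpace M] (h : HasCompactsDirectedCover X Y) {f : Y → M} (hf : Continuous f)
    (hsurj : Function.Surjective f) : HasCompactsDirectedCover X M := by
  obtain ⟨ψ, hmono, hcpt, hcover⟩ := h
  refine ⟨fun K => f '' ψ K, fun K L hKL => image_mono (hmono hKL),
    fun K hK => (hcpt K hK).image hf, fun x => ?_⟩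
  obtain ⟨y, rfl⟩ := hsurj x
  obtain ⟨K, hK, hy⟩ := hcover y
  exact ⟨K, hK, mem_image_of_mem f hy⟩

theorem hasCompactsDirectedCover_of_tukey {X M : Type*} [TopologicalSpace X]
    [TopologicalSpace M] [T2Space M]
    (φ : {K : Set X // IsCompact K} → {K : Set M // IsCompact K})
    (hφ : ∀ S : Set {K : Set X // IsCompact K},
      (∀ K : Set X, IsCompact K → ∃ C ∈ S, K ⊆ C.1) → ∀ x : M, ∃ C ∈ S, x ∈ (φ C).1) :
    HasCompactsDirectedCover X M := by
  let ψ : Set X → Set M := fun L => ⋂ (C : {K : Set X // IsCompact K}) (_ : L ⊆ C.1), (φ C).1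
  refine ⟨ψ, fun L L' hLL' x hx => mem_iInter₂.2 fun C hC => mem_iInter₂.1 hx C (hLL'.trans hC),
    fun K hK => ?_, fun x => ?_⟩
  · exact (φ ⟨K, hK⟩).2.of_isClosed_subset (isClosed_biInter fun C _ => (φ C).2.isClosed)
      (iInter₂_subset (⟨K, hK⟩ : {K : Set X // IsCompact K}) (subset_refl K))
  · by_contra! hx
    have hcof : ∀ K, IsCompact K → ∃ C ∈ {C | x ∉ (φ C).1}, K ⊆ C.1 := fun K hK => by
      obtain ⟨C, hKC, hxC⟩ : ∃ C : {K : Set X // IsCompact K}, K ⊆ C.1 ∧ x ∉ (φ C).1 := by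
        simpa [ψ] using hx K hK
      exact ⟨C, hxC, hKC⟩
    obtain ⟨C, hxC, hC⟩ := hφ _ hcof x
    exact hxC hC

theorem exists_tukey_iff_hasCompactsDirectedCover {X M : Type*} [TopologicalSpace X]
    [TopologicalSpace M] [T2Space M] :
    (∃ φ : {K : Set X // IsCompact K} → {K : Set M // IsCompact K},
      ∀ S : Set {K : Set X // IsCompact K},
        (∀ K : Set X, IsCompact K → ∃ C ∈ S, K ⊆ C.1) → ∀ x : M, ∃ C ∈ S, x ∈ (φ C).1) ↔
      HasCompactsDirectedCover X M := by
  refine ⟨fun ⟨φ, hφ⟩ => hasCompactsDirectedCover_of_tukey φ hφ,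
    fun ⟨ψ, hmono, hcpt, hcover⟩ => ⟨fun C => ⟨ψ C.1, hcpt C.1 C.2⟩, fun S hS x => ?_⟩⟩
  obtain ⟨K, hK, hx⟩ := hcover x
  obtain ⟨C, hCS, hKC⟩ := hS K hK
  exact ⟨C, hCS, hmono hKC hx⟩

theorem isCompact_insert_iUnion {X : Type*} [TopologicalSpace X] {x : X} {C : ℕ → Set X}
    (hC : ∀ n, IsCompact (C n)) (hx : Tendsto C atTop (𝓝 x).smallSets) :
    IsCompact (insert x (⋃ n, C n)) := by
  classical
  refine isCompact_of_finite_subcover fun U hUo hcover => ?_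
  obtain ⟨i, hi⟩ := mem_iUnion.1 (hcover (mem_insert x _))
  obtain ⟨N, hN⟩ := eventually_atTop.1 (tendsto_smallSets_iff.1 hx _ ((hUo i).mem_nhds hi))
  choose t ht using fun n => (hC n).elim_finite_subcover U hUo
    ((subset_iUnion C n).trans ((subset_insert _ _).trans hcover))
  refine ⟨insert i ((Finset.range N).biUnion t), ?_⟩
  rintro y (rfl | hy)
  · exact mem_biUnion (Finset.mem_insert_self _ _) hi
  obtain ⟨n, hn⟩ := mem_iUnion.1 hy
  rcases lt_or_ge n N with h | h
  · obtain ⟨j, hj, hyj⟩ := mem_iUnion₂.1 (ht n hn)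
    exact mem_biUnion
      (Finset.mem_insert_of_mem (Finset.mem_biUnion.2 ⟨n, Finset.mem_range.2 h, hj⟩)) hyj
  · exact mem_biUnion (Finset.mem_insert_self _ _) (hN n h hn)

theorem isCompact_union_iUnion_of_tendsto {X : Type*} [TopologicalSpace X] {K : ℕ → Compacts X}
    {L : Compacts X} (h : Tendsto K atTop (𝓝 L)) : IsCompact ((L : Set X) ∪ ⋃ n, K n) := by
  simpa using Compacts.isCompact_biUnion_coe_of_isCompact h.isCompact_insert_range

theorem isCompact_ratCast_preimage {K : Set ℝ} (hK : IsCompact K)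
    (hKR : K ⊆ range ((↑) : ℚ → ℝ)) : IsCompact (((↑) : ℚ → ℝ) ⁻¹' K) :=
  (Rat.isUniformEmbedding_coe_real.isInducing.isCompact_preimage_iff hKR).2 hK

theorem analyticSet_setOf_not_subset {X : Type*} [MetricSpace X] [CompleteSpace X]
    [SecondCountableTopology X] [MeasurableSpace X] [BorelSpace X] {Y : Set X}
    (hY : MeasurableSet Y) : AnalyticSet {K : Compacts X | ¬ (K : Set X) ⊆ Y} := by
  borelize (Compacts X)
  have hmem : IsClosed {p : Compacts X × X | p.2 ∈ p.1} := by
    have : {p : Compacts X × X | p.2 ∈ p.1}ᶜ =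
        (fun p => (p.1, ({p.2} : Compacts X))) ⁻¹' {q | Disjoint (q.1 : Set X) q.2} := by
      ext; simp
    rw [← isOpen_compl_iff, this]
    exact Compacts.isOpen_setOfPred_disjoint_coe.preimage
      (continuous_fst.prodMk (Compacts.continuous_singleton.comp continuous_snd))
  have : {K : Compacts X | ¬ (K : Set X) ⊆ Y} = Prod.fst '' ({p | p.2 ∈ p.1} ∩ {p | p.2 ∉ Y}) := by
    ext K; simp [not_subset]
  rw [this]
  exact (hmem.measurableSet.inter (hY.compl.preimage measurable_snd)).analyticSet
    |>.image_of_continuous continuous_fst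

theorem List.suffix_iff_eq_or_cons_suffix {α : Type*} {s t : List α} :
    s <:+ t ↔ s = t ∨ ∃ a, a :: s <:+ t := by
  refine ⟨?_, ?_⟩
  · rintro ⟨w, rfl⟩
    rcases List.eq_nil_or_concat w with rfl | ⟨L, a, rfl⟩
    · exact Or.inl rfl
    · exact Or.inr ⟨a, L, by simp⟩
  · rintro (rfl | ⟨a, h⟩)
    · exact List.suffix_refl s
    · exact (List.suffix_cons a s).trans h

theorem Rat.inv_den_mul_two_pow_le_sub {r : ℚ} {k : ℤ} {e : ℕ} (h : k / 2 ^ e < r) :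
    ((r.den : ℚ) * 2 ^ e)⁻¹ ≤ r - k / 2 ^ e := by
  have hpos : (0 : ℚ) < r.den * 2 ^ e := by positivity
  have hint : (r - k / 2 ^ e) * (r.den * 2 ^ e) = ((r.num * 2 ^ e - k * r.den : ℤ) : ℚ) := by
    have hnum : (r.num : ℚ) = r * r.den := by exact_mod_cast (Rat.mul_den_eq_num r).symm
    push_cast
    rw [hnum]
    field_simp
  have hz : (0 : ℤ) < r.num * 2 ^ e - k * r.den := by
    exact_mod_cast hint ▸ mul_pos (sub_pos.2 h) hpos
  rw [inv_le_iff_one_le_mul₀ hpos, hint]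
  exact_mod_cast hz

namespace PiNat

variable {α : Type*}

theorem res_suffix_res (y : ℕ → α) {m n : ℕ} (h : m ≤ n) : res y m <:+ res y n := by
  induction n, h using Nat.le_induction with
  | base => exact List.suffix_refl _
  | succ n _ ih => exact ih.trans (List.suffix_cons _ _)

theorem res_length_eq_of_suffix_res {y : ℕ → α} {s : List α} {n : ℕ} (h : s <:+ res y n) :
    res y s.length = s := by
  have hle : s.length ≤ n := by simpa using h.length_le
  have h1 := List.suffix_iff_eq_drop.1 h
  have h2 := List.suffix_iff_eq_drop.1 (res_suffix_res y hle)
  simp only [res_length] at h1 h2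
  rw [h2, ← h1]

theorem tendsto_of_res_eq_res [TopologicalSpace α] [DiscreteTopology α] {v : ℕ → ℕ → α}
    {x : ℕ → α} (h : ∀ n, res (v n) n = res x n) : Tendsto v atTop (𝓝 x) :=
  tendsto_pi_nhds.2 fun i => tendsto_nhds_of_eventually_eq <|
    (eventually_gt_atTop i).mono fun n hn => res_eq_res.1 (h n) hn

end PiNat

namespace CompactsRat

theorem mem_range_of_mem_closure {M W : Type*} [TopologicalSpace M] [MetricSpace W]
    {ι : M → W} (hι : Continuous ι) {ψ : Set ℚ → Set M} (hmono : Monotone ψ)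
    (hcpt : ∀ K, IsCompact K → IsCompact (ψ K)) {p : Compacts ℝ × W}
    (hp : p ∈ closure {q : Compacts ℝ × W |
      (q.1 : Set ℝ) ⊆ range ((↑) : ℚ → ℝ) ∧ q.2 ∈ ι '' ψ (((↑) : ℚ → ℝ) ⁻¹' q.1)})
    (hpR : (p.1 : Set ℝ) ⊆ range ((↑) : ℚ → ℝ)) : p.2 ∈ range ι := by
  obtain ⟨q, hqG, hq⟩ := mem_closure_iff_seq_limit.1 hp
  let L := (p.1 : Set ℝ) ∪ ⋃ n, ((q n).1 : Set ℝ)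
  have hL : IsCompact (ψ (((↑) : ℚ → ℝ) ⁻¹' L)) :=
    hcpt _ (isCompact_ratCast_preimage (isCompact_union_iUnion_of_tendsto
      ((continuous_fst.tendsto p).comp hq)) (union_subset hpR (iUnion_subset fun n => (hqG n).1)))
  have hqL : ∀ n, (q n).2 ∈ ι '' ψ (((↑) : ℚ → ℝ) ⁻¹' L) := fun n =>
    image_mono (hmono (preimage_mono (subset_union_of_subset_right (subset_iUnion _ n) _)))
      (hqG n).2
  obtain ⟨x, -, hx⟩ := (hL.image hι).isClosed.mem_of_tendsto
    ((continuous_snd.tendsto p).comp hq) (Eventually.of_forall hqL)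
  exact ⟨x, hx⟩

theorem analyticSet_compl_inter_setOf_subset_range_ratCast {W : Type*} [TopologicalSpace W]
    [PolishSpace W] {F : Set (Compacts ℝ × W)} (hF : IsClosed F) :
    AnalyticSet (F ∩ {p | (p.1 : Set ℝ) ⊆ range ((↑) : ℚ → ℝ)})ᶜ := by
  borelize (Compacts ℝ × W)
  rw [compl_inter, union_eq_iUnion]
  refine AnalyticSet.iUnion (Bool.forall_bool.2 ⟨?_, ?_⟩)
  · exact (analyticSet_setOf_not_subset (countable_range _).measurableSet).preimage continuous_fst
  · exact hF.isOpen_compl.measurableSet.analyticSet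

theorem sigma12_of_hasCompactsDirectedCover {M : Type u} [TopologicalSpace M] [MetrizableSpace M]
    [SeparableSpace M] (hM : HasCompactsDirectedCover ℚ M) :
    ∃ (Z : Type u) (_ : TopologicalSpace Z), PolishSpace Z ∧
      ∃ A : Set Z, AnalyticSet Aᶜ ∧
        ∃ f : A → M, Continuous f ∧ Function.Surjective f := by
  obtain ⟨ψ, hmono, hcpt, hcover⟩ := hM
  let := metrizableSpaceMetric M
  let ι : M → UniformSpace.Completion M := (↑)
  let R := range ((↑) : ℚ → ℝ)
  let G : Set (Compacts ℝ × UniformSpace.Completion M) :=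
    {p | (p.1 : Set ℝ) ⊆ R ∧ p.2 ∈ ι '' ψ (((↑) : ℚ → ℝ) ⁻¹' p.1)}
  let A := closure G ∩ {p | (p.1 : Set ℝ) ⊆ R}
  choose f hf using fun a : A =>
    mem_range_of_mem_closure (UniformSpace.Completion.continuous_coe M) hmono hcpt a.2.1 a.2.2
  refine ⟨_, inferInstance, inferInstance, A,
    analyticSet_compl_inter_setOf_subset_range_ratCast isClosed_closure, f, ?_, fun x => ?_⟩
  · refine UniformSpace.Completion.coe_isometry.isEmbedding.continuous_iff.2 ?_
    rw [show ι ∘ f = fun a => a.1.2 from funext hf]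
    fun_prop
  · obtain ⟨K, hK, hx⟩ := hcover x
    let C : Compacts ℝ := ⟨(↑) '' K, hK.image Rat.continuous_coe_real⟩
    have hCR : (C : Set ℝ) ⊆ R := image_subset_range _ _
    have hCK : ((↑) : ℚ → ℝ) ⁻¹' C = K := preimage_image_eq K Rat.cast_injective
    have hp : (C, ι x) ∈ A := ⟨subset_closure ⟨hCR, x, hCK ▸ hx, rfl⟩, hCR⟩
    exact ⟨⟨_, hp⟩, UniformSpace.Completion.coe_injective M (hf ⟨_, hp⟩)⟩

/-- Finite sequences are written newest entry first, as in `PiNat.res`. Along a branch `y` the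
label of `y|n` is the partial sum `∑ i < n, 2⁻¹ ^ ((i + 1) ^ 2 + y 0 + ⋯ + y i)`; the gaps between
exponents grow, which makes every branch converge to an irrational number. -/
def labelExp (s : List ℕ) : ℕ := s.length ^ 2 + s.sum

def label : List ℕ → ℚ
  | [] => 0
  | a :: s => label s + 2⁻¹ ^ labelExp (a :: s)

theorem label_cons (a : ℕ) (s : List ℕ) :
    label (a :: s) = label s + 2⁻¹ ^ labelExp (a :: s) :=
  rfl

theorem labelExp_cons (a : ℕ) (s : List ℕ) :
    labelExp (a :: s) = labelExp s + (2 * s.length + 1) + a := by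
  simp only [labelExp, List.length_cons, List.sum_cons]
  ring

theorem label_le_label_append (w u : List ℕ) : label u ≤ label (w ++ u) := by
  induction w with
  | nil => rfl
  | cons a w ih =>
    rw [List.cons_append, label_cons]
    linarith [pow_pos (by norm_num : (0 : ℚ) < 2⁻¹) (labelExp (a :: (w ++ u)))]

theorem label_nonneg (s : List ℕ) : 0 ≤ label s := by
  simpa [label] using label_le_label_append s []

/-- Each new term is at most half of the previous one. -/
theorem label_append_add_le (w u : List ℕ) :
    label (w ++ u) + 2⁻¹ ^ labelExp (w ++ u) ≤ label u + 2⁻¹ ^ labelExp u := by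
  induction w with
  | nil => rfl
  | cons a w ih =>
    have hexp : labelExp (w ++ u) + 1 ≤ labelExp (a :: (w ++ u)) := by
      rw [labelExp_cons]; omega
    have hhalf : 2 * (2⁻¹ : ℚ) ^ labelExp (a :: (w ++ u)) ≤ 2⁻¹ ^ labelExp (w ++ u) := by
      have := pow_le_pow_of_le_one (by norm_num : (0 : ℚ) ≤ 2⁻¹) (by norm_num) hexp
      calc 2 * (2⁻¹ : ℚ) ^ labelExp (a :: (w ++ u))
          ≤ 2 * 2⁻¹ ^ (labelExp (w ++ u) + 1) := by linarith
        _ = 2⁻¹ ^ labelExp (w ++ u) := by ring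
    rw [List.cons_append, label_cons]
    linarith

theorem abs_label_sub_le {m : ℕ} {s t : List ℕ} (h : m :: s <:+ t) :
    |label t - label s| ≤ 2⁻¹ ^ m := by
  obtain ⟨w, rfl⟩ := h
  have hlow := label_le_label_append (w ++ [m]) s
  have hup := label_append_add_le w (m :: s)
  have hexp : m + 1 ≤ labelExp (m :: s) := by rw [labelExp_cons]; omega
  have hle : (2⁻¹ : ℚ) ^ labelExp (m :: s) ≤ 2⁻¹ ^ (m + 1) :=
    pow_le_pow_of_le_one (by norm_num) (by norm_num) hexp
  rw [List.append_assoc, List.singleton_append] at hlow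
  rw [label_cons] at hup
  rw [abs_of_nonneg (by linarith)]
  have := pow_pos (by norm_num : (0 : ℚ) < 2⁻¹) (labelExp (w ++ m :: s))
  calc label (w ++ m :: s) - label s ≤ 2 * 2⁻¹ ^ (m + 1) := by linarith
    _ = 2⁻¹ ^ m := by ring

theorem label_res_const_le (n k : ℕ) : label (res (fun _ => n) k) ≤ 2⁻¹ ^ n := by
  cases k with
  | zero => simp [label]
  | succ k =>
    have h := abs_label_sub_le (res_suffix_res (fun _ => n) (Nat.succ_le_succ k.zero_le))
    simp only [res_succ, res_zero, label, sub_zero] at h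
    exact (le_abs_self _).trans h

theorem exists_label_eq_div (s : List ℕ) : ∃ k : ℤ, label s = k / 2 ^ labelExp s := by
  induction s with
  | nil => exact ⟨0, by simp [label]⟩
  | cons a s ih =>
    obtain ⟨k, hk⟩ := ih
    refine ⟨k * 2 ^ (2 * s.length + 1 + a) + 1, ?_⟩
    rw [label_cons, hk, labelExp_cons, add_assoc, inv_pow, pow_add]
    field_simp
    push_cast
    ring

theorem label_res_mem_Icc (y : ℕ → ℕ) {m n : ℕ} (h : n ≤ m) :
    label (res y m) ∈ Icc (label (res y n)) (label (res y n) + 2⁻¹ ^ labelExp (res y n)) := by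
  obtain ⟨w, hw⟩ := res_suffix_res y h
  rw [← hw]
  refine ⟨label_le_label_append w _, ?_⟩
  linarith [label_append_add_le w (res y n),
    pow_pos (by norm_num : (0 : ℚ) < 2⁻¹) (labelExp (w ++ res y n))]

/-- A rational `r` with denominator `N` lying above the dyadic `label (y|N)` is at least
`1 / (N * 2 ^ labelExp (y|N))` above it, but the next exponent is larger by more than `2N`. -/
theorem not_forall_label_res_mem_Icc (y : ℕ → ℕ) (r : ℚ) :
    ¬ ∀ n, r ∈ Icc (label (res y n)) (label (res y n) + 2⁻¹ ^ labelExp (res y n)) := by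
  intro h
  set N := r.den
  obtain ⟨k, hk⟩ := exists_label_eq_div (res y N)
  set e := labelExp (res y N)
  have hstep : label (res y (N + 1)) = label (res y N) + 2⁻¹ ^ labelExp (res y (N + 1)) := rfl
  have hgap : e + (2 * N + 1) ≤ labelExp (res y (N + 1)) := by
    simp only [e, res_succ, labelExp_cons, res_length]; omega
  obtain ⟨hlo, hhi⟩ := h (N + 1)
  have hlow : ((N : ℚ) * 2 ^ e)⁻¹ ≤ r - label (res y N) := by
    rw [hk] at hstep ⊢
    exact Rat.inv_den_mul_two_pow_le_sub (by
      linarith [pow_pos (by norm_num : (0 : ℚ) < 2⁻¹) (labelExp (res y (N + 1)))])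
  have hup : r - label (res y N) ≤ 2⁻¹ ^ e * 2⁻¹ ^ (2 * N) := by
    have := pow_le_pow_of_le_one (by norm_num : (0 : ℚ) ≤ 2⁻¹) (by norm_num) hgap
    calc r - label (res y N) ≤ 2 * 2⁻¹ ^ labelExp (res y (N + 1)) := by linarith
      _ ≤ 2 * 2⁻¹ ^ (e + (2 * N + 1)) := by linarith
      _ = 2⁻¹ ^ e * 2⁻¹ ^ (2 * N) := by rw [pow_add, pow_succ]; ring
  have hN : (N : ℚ) < 2 ^ (2 * N) := by
    exact_mod_cast Nat.lt_two_pow_self.trans_le (Nat.pow_le_pow_right two_pos (by omega))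
  have := hlow.trans hup
  rw [mul_inv, ← inv_pow, mul_comm] at this
  refine (inv_strictAnti₀ (by positivity) hN).not_ge ?_
  rw [← inv_pow]
  exact le_of_mul_le_mul_left this (by positivity)

theorem finite_setOf_label_res_mem {K : Set ℚ} (hK : IsCompact K) (y : ℕ → ℕ) :
    {n | label (res y n) ∈ K}.Finite := by
  by_contra hinf
  obtain ⟨r, -, hr⟩ := hK.exists_mapClusterPt_of_frequently
    (Nat.frequently_atTop_iff_infinite.2 hinf)
  exact not_forall_label_res_mem_Icc y r fun n =>
    isClosed_Icc.mem_of_mapClusterPt hr (eventually_atTop.2 ⟨n, fun m => label_res_mem_Icc y⟩)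

theorem isCompact_setOf_label_res_const_mem {K : Set ℚ} (hK : IsCompact K) :
    IsCompact {z : ℕ → ℕ | ∀ n, label (res (fun _ => n) (z n)) ∈ K} := by
  have : {z : ℕ → ℕ | ∀ n, label (res (fun _ => n) (z n)) ∈ K} =
      univ.pi fun n => {k | label (res (fun _ => n) k) ∈ K} := by
    ext; simp
  rw [this]
  exact isCompact_univ_pi fun n => (finite_setOf_label_res_mem hK _).isCompact

section Tree

variable {α : Type*} {T : Set (List α)}

def SuffixClosed (T : Set (List α)) : Prop := ∀ ⦃s t⦄, s <:+ t → t ∈ T → s ∈ T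

theorem SuffixClosed.setOf_suffix_eq_empty (hT : SuffixClosed T) {s : List α} (hs : s ∉ T) :
    {t ∈ T | s <:+ t} = ∅ :=
  eq_empty_of_forall_notMem fun _ ht => hs (hT ht.2 ht.1)

theorem setOf_suffix_eq_insert_iUnion {s : List α} (hs : s ∈ T) :
    {t ∈ T | s <:+ t} = insert s (⋃ a, {t ∈ T | a :: s <:+ t}) := by
  ext t
  simp only [mem_ofPred_eq, mem_insert_iff, mem_iUnion]
  constructor
  · rintro ⟨htT, hst⟩
    rcases List.suffix_iff_eq_or_cons_suffix.1 hst with rfl | ⟨a, ha⟩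
    exacts [Or.inl rfl, Or.inr ⟨a, htT, ha⟩]
  · rintro (rfl | ⟨a, htT, ha⟩)
    exacts [⟨hs, List.suffix_refl _⟩, ⟨htT, (List.suffix_cons a s).trans ha⟩]

theorem SuffixClosed.acc_nil (hT : SuffixClosed T) (hbr : ¬ ∃ y : ℕ → α, ∀ n, res y n ∈ T) :
    Acc (fun t s => t ∈ T ∧ ∃ a, t = a :: s) [] := by
  by_contra hacc
  obtain ⟨f, hf0, hf⟩ := not_acc_iff_exists_descending_chain.1 hacc
  choose y hy using fun n => (hf n).2
  have hres : ∀ n, f n = res y n := by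
    intro n
    induction n with
    | zero => exact hf0
    | succ n ih => rw [hy n, ih, res_succ]
  refine hbr ⟨y, fun n => hT (List.suffix_cons (y n) _) ?_⟩
  rw [← res_succ, ← hres]
  exact (hf n).1

end Tree

theorem tendsto_image_label_setOf_suffix_smallSets (T : Set (List ℕ)) (s : List ℕ) :
    Tendsto (fun m => label '' {t ∈ T | m :: s <:+ t}) atTop (𝓝 (label s)).smallSets := by
  refine tendsto_smallSets_iff.2 fun U hU => ?_
  obtain ⟨ε, hε, hball⟩ := Metric.mem_nhds_iff.1 hU
  obtain ⟨N, hN⟩ := exists_pow_lt_of_lt_one hε (by norm_num : (2⁻¹ : ℝ) < 1)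
  filter_upwards [eventually_ge_atTop N] with m hm
  rintro _ ⟨t, ⟨-, hts⟩, rfl⟩
  refine hball (lt_of_le_of_lt ?_ hN)
  calc dist (label t) (label s) = ((|label t - label s| : ℚ) : ℝ) := by
        rw [Rat.dist_eq]; push_cast; rfl
    _ ≤ ((2⁻¹ ^ m : ℚ) : ℝ) := by exact_mod_cast abs_label_sub_le hts
    _ ≤ 2⁻¹ ^ N := by push_cast; exact pow_le_pow_of_le_one (by norm_num) (by norm_num) hm

/-- By well-founded induction on the nodes: the labels of the extensions of `s` are `label s`
together with the compact label sets of the children `m :: s`, which converge to `label s`. -/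
theorem SuffixClosed.isCompact_image_label {T : Set (List ℕ)} (hT : SuffixClosed T)
    (hbr : ¬ ∃ y : ℕ → ℕ, ∀ n, res y n ∈ T) : IsCompact (label '' T) := by
  suffices h : ∀ s, Acc (fun t s => t ∈ T ∧ ∃ m, t = m :: s) s →
      IsCompact (label '' {t ∈ T | s <:+ t}) by
    simpa using h [] (hT.acc_nil hbr)
  intro s hs
  induction hs with
  | intro s _ ih =>
  by_cases hsT : s ∈ T
  · rw [setOf_suffix_eq_insert_iUnion hsT, image_insert_eq, image_iUnion]
    refine isCompact_insert_iUnion (fun m => ?_) (tendsto_image_label_setOf_suffix_smallSets T s)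
    by_cases hm : m :: s ∈ T
    · exact ih _ ⟨hm, m, rfl⟩
    · simp [hT.setOf_suffix_eq_empty hm]
  · simp [hT.setOf_suffix_eq_empty hsT]

def fiberTree (g : (ℕ → ℕ) → ℕ → ℕ) (z : ℕ → ℕ) : Set (List ℕ) :=
  {s | ∃ u, res u s.length = s ∧ res (g u) s.length = res z s.length}

theorem suffixClosed_fiberTree (g : (ℕ → ℕ) → ℕ → ℕ) (z : ℕ → ℕ) :
    SuffixClosed (fiberTree g z) := by
  rintro s t hst ⟨u, hu, hgu⟩
  refine ⟨u, res_length_eq_of_suffix_res (hu ▸ hst), res_eq_res.2 fun i hi => ?_⟩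
  exact res_eq_res.1 hgu (hi.trans_le hst.length_le)

theorem isOpen_setOf_mem_fiberTree (g : (ℕ → ℕ) → ℕ → ℕ) (s : List ℕ) :
    IsOpen {z | s ∈ fiberTree g z} := by
  have : {z | s ∈ fiberTree g z} = ⋃ (u) (_ : res u s.length = s), cylinder (g u) s.length := by
    ext z
    simp [fiberTree, cylinder_eq_res, eq_comm]
  rw [this]
  exact isOpen_iUnion fun u => isOpen_iUnion fun _ => isOpen_cylinder _ _ _

theorem mem_range_iff_exists_branch_fiberTree {g : (ℕ → ℕ) → ℕ → ℕ} (hg : Continuous g)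
    (z : ℕ → ℕ) : z ∈ range g ↔ ∃ y, ∀ n, res y n ∈ fiberTree g z := by
  refine ⟨?_, ?_⟩
  · rintro ⟨y, rfl⟩
    exact ⟨y, fun n => ⟨y, by rw [res_length], rfl⟩⟩
  rintro ⟨y, hy⟩
  choose u hu hgu using hy
  simp only [res_length] at hu hgu
  exact ⟨y, tendsto_nhds_unique ((hg.tendsto y).comp (tendsto_of_res_eq_res hu))
    (tendsto_of_res_eq_res hgu)⟩

theorem exists_tree_of_analyticSet_compl {A : Set (ℕ → ℕ)} (hA : AnalyticSet Aᶜ) :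
    ∃ 𝒯 : (ℕ → ℕ) → Set (List ℕ), (∀ z, SuffixClosed (𝒯 z)) ∧
      (∀ s, IsOpen {z | s ∈ 𝒯 z}) ∧ ∀ z, z ∉ A ↔ ∃ y, ∀ n, res y n ∈ 𝒯 z := by
  rw [AnalyticSet] at hA
  rcases hA with hA | ⟨g, hg, hgA⟩
  · refine ⟨fun _ => ∅, fun _ _ _ _ h => h, fun _ => isOpen_empty, fun z => ?_⟩
    simp [← mem_compl_iff, hA]
  · exact ⟨fiberTree g, suffixClosed_fiberTree g, isOpen_setOf_mem_fiberTree g,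
      fun z => by rw [← mem_compl_iff, ← hgA, mem_range_iff_exists_branch_fiberTree hg]⟩

theorem hasCompactsDirectedCover_of_analyticSet_compl_nat_nat {A : Set (ℕ → ℕ)}
    (hA : AnalyticSet Aᶜ) : HasCompactsDirectedCover ℚ A := by
  obtain ⟨𝒯, h𝒯, h𝒯o, hA𝒯⟩ := exists_tree_of_analyticSet_compl hA
  let ζ : Set ℚ → Set (ℕ → ℕ) := fun K =>
    {z | ∀ n, label (res (fun _ => n) (z n)) ∈ K} ∩ {z | ∀ s ∈ 𝒯 z, label s ∈ K}
  have hζA : ∀ K, IsCompact K → ζ K ⊆ A := by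
    intro K hK z hz
    by_contra hzA
    obtain ⟨y, hy⟩ := (hA𝒯 z).1 hzA
    exact infinite_univ (finite_setOf_label_res_mem hK y |>.subset fun n _ => hz.2 _ (hy n))
  have hζ : ∀ K, IsCompact K → IsCompact (ζ K) := by
    intro K hK
    have : {z | ∀ s ∈ 𝒯 z, label s ∈ K} = ⋂ (s) (_ : label s ∉ K), {z | s ∈ 𝒯 z}ᶜ := by
      ext z
      simp only [mem_iInter, mem_compl_iff, mem_ofPred_eq]
      grind
    rw [show ζ K = _ ∩ _ from rfl, this]
    exact (isCompact_setOf_label_res_const_mem hK).inter_right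
      (isClosed_biInter fun s _ => (h𝒯o s).isClosed_compl)
  refine ⟨fun K => (↑) ⁻¹' ζ K, fun K L hKL => preimage_mono ?_, fun K hK => ?_, fun a => ?_⟩
  · exact inter_subset_inter (fun z hz n => hKL (hz n)) fun z hz s hs => hKL (hz s hs)
  · rw [Subtype.isCompact_iff, Subtype.image_preimage_coe, inter_eq_right.2 (hζA K hK)]
    exact hζ K hK
  · have hbound : Tendsto (fun n => label (res (fun _ => n) (a.1 n))) atTop (𝓝 0) :=
      tendsto_of_tendsto_of_tendsto_of_le_of_le tendsto_const_nhds
        (tendsto_pow_atTop_nhds_zero_of_lt_one (r := (2⁻¹ : ℚ)) (by norm_num) (by norm_num))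
        (fun n => label_nonneg _) (fun n => label_res_const_le n _)
    refine ⟨label '' 𝒯 a ∪ insert 0 (range fun n => label (res (fun _ => n) (a.1 n))),
      ((h𝒯 a).isCompact_image_label fun h => (hA𝒯 a).2 h a.2).union
        hbound.isCompact_insert_range, ?_⟩
    exact ⟨fun n => Or.inr (Or.inr ⟨n, rfl⟩), fun s hs => Or.inl ⟨s, hs, rfl⟩⟩

end CompactsRat

theorem hasCompactsDirectedCover_of_analyticSet_compl {Z : Type*} [TopologicalSpace Z]
    [PolishSpace Z] {A : Set Z} (hA : AnalyticSet Aᶜ) :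
    HasCompactsDirectedCover ℚ A := by
  rcases isEmpty_or_nonempty Z with hZ | hZ
  · exact ⟨fun _ => ∅, monotone_const, fun _ _ => isCompact_empty, fun a => hZ.elim a.1⟩
  obtain ⟨h, hc, hs⟩ := PolishSpace.exists_nat_nat_continuous_surjective Z
  refine (CompactsRat.hasCompactsDirectedCover_of_analyticSet_compl_nat_nat (A := h ⁻¹' A)
    (hA.preimage hc)).map (f := fun y => ⟨h y, y.2⟩) (by fun_prop) fun a => ?_
  obtain ⟨y, hy⟩ := hs a
  exact ⟨⟨y, by simp [hy]⟩, Subtype.ext hy⟩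

/-- For a separable metrizable space `M`, we have `𝒦(ℚ) ≥_T (M,𝒦(M))` if and only if `M`
is `Σ¹₂`, i.e. a continuous image of a coanalytic subset of a Polish space. -/
theorem compactsRat_tukey_quotient_iff_sigma12
    (M : Type u) [TopologicalSpace M]
    [TopologicalSpace.MetrizableSpace M] [TopologicalSpace.SeparableSpace M] :
    (∃ φ : {K : Set ℚ // IsCompact K} → {K : Set M // IsCompact K},
      ∀ S : Set {K : Set ℚ // IsCompact K},
        (∀ K : Set ℚ, IsCompact K → ∃ C ∈ S, K ⊆ C.1) →
        ∀ x : M, ∃ C ∈ S, x ∈ (φ C).1) ↔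
    (∃ (Z : Type u) (_ : TopologicalSpace Z), PolishSpace Z ∧
      ∃ A : Set Z, MeasureTheory.AnalyticSet Aᶜ ∧
        ∃ f : A → M, Continuous f ∧ Function.Surjective f) := by
  rw [exists_tukey_iff_hasCompactsDirectedCover]
  refine ⟨CompactsRat.sigma12_of_hasCompactsDirectedCover, ?_⟩
  rintro ⟨Z, _, _, A, hA, f, hf, hsurj⟩
  exact (hasCompactsDirectedCover_of_analyticSet_compl hA).map hf hsurj
end
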